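/- arXiv:nlin/0610075 — 7 statements merged into one kernel-verified Lean document; each statement's English description precedes it below -/
import Mathlib

section
/- Let N ≥ 2 and κ := √(2N/(N−1)). Let v, ϖ, h⊥ : ℝ² → ℂ^{N−1} (row-vector valued), h∥, θ : ℝ² → ℝ, 𝐡⊥ : ℝ² → su(N−1), Θ : ℝ² → u(N−1) be smooth functions of (t,x) with θ = −i·tr Θ. Define the su(N)-valued maps e_x := (iκ/N)·diag(1−N,1,…,1) (constant), ω_x := [[0, v],[−v†, 0]], e_t := κ·[[(1/N − 1)·i·h∥, h⊥],[−h⊥†, 𝐡⊥ + (i·h∥/N)·1_{N−1}]], ω_t := [[−iθ, ϖ],[−ϖ†, Θ]]. Then the zero-torsion Cartan structure equation ∂_x e_t − ∂_t e_x + [ω_x, e_t] − [ω_t, e_x] = 0 holds at every point of ℝ² if and only if the following three equations hold at every point: (i) (1/N − 1)·i·∂_x h∥ + h⊥·v̄ − v·h̄⊥ = 0; (ii) ∂_x 𝐡⊥ + h̄⊥⊗v − v̄⊗h⊥ − (N−1)^{−1}·(v·h̄⊥ − h⊥·v̄)·1_{N−1} = 0; (iii) i·ϖ − ∂_x h⊥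 − i·h∥·v − v⌟𝐡⊥ = 0. -/
open Matrix

noncomputable section

/-- Index type for N×N matrices, N = n+1, split as first index ⊕ the rest. -/
abbrev Idx (n : ℕ) := Fin 1 ⊕ Fin n

/-- Block matrix [[z, p],[q, M]]. -/
def blk {n : ℕ} (z : ℂ) (p q : Fin n → ℂ) (M : Matrix (Fin n) (Fin n) ℂ) :
    Matrix (Idx n) (Idx n) ℂ :=
  Matrix.fromBlocks (Matrix.of fun _ _ => z) (Matrix.of fun _ j => p j)
    (Matrix.of fun i _ => q i) M

/-- Componentwise complex conjugate of a row vector. -/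
def cvec {n : ℕ} (p : Fin n → ℂ) : Fin n → ℂ := fun j => starRingEnd ℂ (p j)

/-- Outer product (p⊗q)_{jk} = p_j·q_k. -/
def outer {n : ℕ} (p q : Fin n → ℂ) : Matrix (Fin n) (Fin n) ℂ :=
  Matrix.of fun j k => p j * q k

/-- Dot product p·q = Σ_j p_j q_j. -/
def dotv {n : ℕ} (p q : Fin n → ℂ) : ℂ := ∑ j, p j * q j

/-- Contraction (p⌟M)_k = Σ_j p_j M_{jk}. -/
def contr {n : ℕ} (p : Fin n → ℂ) (M : Matrix (Fin n) (Fin n) ℂ) : Fin n → ℂ :=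
  fun k => ∑ j, p j * M j k

/-- Entrywise ∂_x of a matrix-valued function of (t,x). -/
def dxM {m : Type*} (f : ℝ → ℝ → Matrix m m ℂ) (t x : ℝ) : Matrix m m ℂ :=
  Matrix.of fun i j => deriv (fun y => f t y i j) x

/-- Entrywise ∂_t of a matrix-valued function of (t,x). -/
def dtM {m : Type*} (f : ℝ → ℝ → Matrix m m ℂ) (t x : ℝ) : Matrix m m ℂ :=
  Matrix.of fun i j => deriv (fun s => f s x i j) t

/-- Componentwise ∂_x of a row-vector-valued function of (t,x). -/
def dxV {n : ℕ} (f : ℝ → ℝ → Fin n → ℂ) (t x : ℝ) : Fin n → ℂ :=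
  fun j => deriv (fun y => f t y j) x

/-- Componentwise ∂_t of a row-vector-valued function of (t,x). -/
def dtV {n : ℕ} (f : ℝ → ℝ → Fin n → ℂ) (t x : ℝ) : Fin n → ℂ :=
  fun j => deriv (fun s => f s x j) t

section Aux

theorem blk_a11 {n : ℕ} (z : ℂ) (p q : Fin n → ℂ) (M) (i j : Fin 1) :
    blk z p q M (.inl i) (.inl j) = z := rfl
theorem blk_a12 {n : ℕ} (z : ℂ) (p q : Fin n → ℂ) (M) (i : Fin 1) (j : Fin n) :
    blk z p q M (.inl i) (.inr j) = p j := rfl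
theorem blk_a21 {n : ℕ} (z : ℂ) (p q : Fin n → ℂ) (M) (i : Fin n) (j : Fin 1) :
    blk z p q M (.inr i) (.inl j) = q i := rfl
theorem blk_a22 {n : ℕ} (z : ℂ) (p q : Fin n → ℂ) (M) (i j : Fin n) :
    blk z p q M (.inr i) (.inr j) = M i j := rfl

theorem mul_apply_idx {n : ℕ} (A B : Matrix (Idx n) (Idx n) ℂ) (i j : Idx n) :
    (A * B) i j = A i (Sum.inl 0) * B (Sum.inl 0) j
      + ∑ k, A i (Sum.inr k) * B (Sum.inr k) j := by
  rw [Matrix.mul_apply, Fintype.sum_sum_type]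
  simp

theorem sliceC {f : ℝ → ℝ → ℂ} (h : ContDiff ℝ (⊤ : ℕ∞) fun q : ℝ × ℝ => f q.1 q.2)
    (t x : ℝ) : HasDerivAt (fun y => f t y) (deriv (fun y => f t y) x) x := by
  have h1 : Differentiable ℝ fun q : ℝ × ℝ => f q.1 q.2 := h.differentiable (by simp)
  have h2 : Differentiable ℝ fun y : ℝ => ((t, y) : ℝ × ℝ) :=
    Differentiable.prodMk (differentiable_const t) differentiable_id
  exact ((h1.comp h2) x).hasDerivAt

theorem sliceR {f : ℝ → ℝ → ℝ} (h : ContDiff ℝ (⊤ : ℕ∞) fun q : ℝ × ℝ => f q.1 q.2)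
    (t x : ℝ) : HasDerivAt (fun y => f t y) (deriv (fun y => f t y) x) x := by
  have h1 : Differentiable ℝ fun q : ℝ × ℝ => f q.1 q.2 := h.differentiable (by simp)
  have h2 : Differentiable ℝ fun y : ℝ => ((t, y) : ℝ × ℝ) :=
    Differentiable.prodMk (differentiable_const t) differentiable_id
  exact ((h1.comp h2) x).hasDerivAt

end Aux
/-- for the SU(N)-parallel frame data, the zero-torsion Cartan
structure equation ∂_x e_t − ∂_t e_x + [ω_x,e_t] − [ω_t,e_x] = 0 is equivalent
to the three component equations (i), (ii), (iii). -/
theorem statement9 (n : ℕ) (hn : 1 ≤ n) (κ : ℝ)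
    (hκ : κ = Real.sqrt (2 * ((n : ℝ) + 1) / n))
    (v ϖ hp : ℝ → ℝ → Fin n → ℂ) (hpar θf : ℝ → ℝ → ℝ)
    (hb Θ : ℝ → ℝ → Matrix (Fin n) (Fin n) ℂ)
    (hv : ∀ j, ContDiff ℝ (⊤ : ℕ∞) fun q : ℝ × ℝ => v q.1 q.2 j)
    (hϖ : ∀ j, ContDiff ℝ (⊤ : ℕ∞) fun q : ℝ × ℝ => ϖ q.1 q.2 j)
    (hhp : ∀ j, ContDiff ℝ (⊤ : ℕ∞) fun q : ℝ × ℝ => hp q.1 q.2 j)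
    (hhpar : ContDiff ℝ (⊤ : ℕ∞) fun q : ℝ × ℝ => hpar q.1 q.2)
    (hθf : ContDiff ℝ (⊤ : ℕ∞) fun q : ℝ × ℝ => θf q.1 q.2)
    (hhb : ∀ j k, ContDiff ℝ (⊤ : ℕ∞) fun q : ℝ × ℝ => hb q.1 q.2 j k)
    (hΘs : ∀ j k, ContDiff ℝ (⊤ : ℕ∞) fun q : ℝ × ℝ => Θ q.1 q.2 j k)
    (hbsu : ∀ t x, (hb t x)ᴴ = -(hb t x) ∧ (hb t x).trace = 0)
    (hΘu : ∀ t x, (Θ t x)ᴴ = -(Θ t x))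
    (hθtr : ∀ t x, ((θf t x : ℂ)) = -Complex.I * (Θ t x).trace)
    (ex : Matrix (Idx n) (Idx n) ℂ)
    (hex : ex = (Complex.I * (κ : ℂ) / ((n : ℂ) + 1)) • blk (1 - ((n : ℂ) + 1)) 0 0 1)
    (ωx et ωt : ℝ → ℝ → Matrix (Idx n) (Idx n) ℂ)
    (hωx : ∀ t x, ωx t x = blk 0 (v t x) (fun j => -(starRingEnd ℂ (v t x j))) 0)
    (het : ∀ t x, et t x = (κ : ℂ) •
      blk ((1 / ((n : ℂ) + 1) - 1) * Complex.I * (hpar t x : ℂ)) (hp t x)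
        (fun j => -(starRingEnd ℂ (hp t x j)))
        (hb t x + ((Complex.I * (hpar t x : ℂ)) / ((n : ℂ) + 1)) •
          (1 : Matrix (Fin n) (Fin n) ℂ)))
    (hωt : ∀ t x, ωt t x = blk (-Complex.I * (θf t x : ℂ)) (ϖ t x)
        (fun j => -(starRingEnd ℂ (ϖ t x j))) (Θ t x)) :
    (∀ t x, dxM et t x - dtM (fun _ _ => ex) t x
        + (ωx t x * et t x - et t x * ωx t x)
        - (ωt t x * ex - ex * ωt t x) = 0)
    ↔ (∀ t x,
        ((1 / ((n : ℂ) + 1) - 1) * Complex.I * ((deriv (fun y => hpar t y) x : ℝ) : ℂ)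
          + dotv (hp t x) (cvec (v t x)) - dotv (v t x) (cvec (hp t x)) = 0) ∧
        (dxM hb t x + outer (cvec (hp t x)) (v t x) - outer (cvec (v t x)) (hp t x)
          - (((n : ℂ))⁻¹ *
              (dotv (v t x) (cvec (hp t x)) - dotv (hp t x) (cvec (v t x)))) •
            (1 : Matrix (Fin n) (Fin n) ℂ) = 0) ∧
        (∀ j, Complex.I * ϖ t x j - dxV hp t x j
          - Complex.I * (hpar t x : ℂ) * v t x j - contr (v t x) (hb t x) j = 0)) := by
  have hn0 : ((n : ℂ)) ≠ 0 := Nat.cast_ne_zero.mpr (by omega)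
  have hN0 : ((n : ℂ) + 1) ≠ 0 := by
    have : (((n + 1 : ℕ)) : ℂ) ≠ 0 := Nat.cast_ne_zero.mpr (Nat.succ_ne_zero n)
    push_cast at this; exact this
  have hκpos : (0 : ℝ) < κ := by
    rw [hκ]
    apply Real.sqrt_pos.mpr
    have hn' : (0:ℝ) < (n:ℝ) := by exact_mod_cast Nat.pos_of_ne_zero (by omega)
    positivity
  have hκ0 : ((κ : ℝ) : ℂ) ≠ 0 := by
    simpa using Complex.ofReal_ne_zero.mpr (ne_of_gt hκpos)
  have hconj : ∀ t x (l m : Fin n), starRingEnd ℂ (hb t x l m) = -(hb t x m l) := by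
    intro t x l m
    have h1 := congrFun (congrFun (hbsu t x).1 m) l
    simpa [Matrix.conjTranspose_apply] using h1
  have main : ∀ t x,
      (dxM et t x - dtM (fun _ _ => ex) t x
        + (ωx t x * et t x - et t x * ωx t x)
        - (ωt t x * ex - ex * ωt t x) = 0)
      ↔ (((1 / ((n : ℂ) + 1) - 1) * Complex.I * ((deriv (fun y => hpar t y) x : ℝ) : ℂ)
          + dotv (hp t x) (cvec (v t x)) - dotv (v t x) (cvec (hp t x)) = 0) ∧
        (dxM hb t x + outer (cvec (hp t x)) (v t x) - outer (cvec (v t x)) (hp t x)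
          - (((n : ℂ))⁻¹ *
              (dotv (v t x) (cvec (hp t x)) - dotv (hp t x) (cvec (v t x)))) •
            (1 : Matrix (Fin n) (Fin n) ℂ) = 0) ∧
        (∀ j, Complex.I * ϖ t x j - dxV hp t x j
          - Complex.I * (hpar t x : ℂ) * v t x j - contr (v t x) (hb t x) j = 0)) := by
    intro t x
    set Dp : ℂ := ((deriv (fun y => hpar t y) x : ℝ) : ℂ) with hDpdef
    have Hp : HasDerivAt (fun y => ((hpar t y : ℝ) : ℂ)) Dp x :=
      (sliceR hhpar t x).ofReal_comp
    have Hh : ∀ j, HasDerivAt (fun y => hp t y j) (dxV hp t x j) x :=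
      fun j => sliceC (f := fun a b => hp a b j) (hhp j) t x
    have Hb : ∀ j k, HasDerivAt (fun y => hb t y j k) (dxM hb t x j k) x :=
      fun j k => sliceC (f := fun a b => hb a b j k) (hhb j k) t x
    -- entries of dx et
    have dEt11 : ∀ (i j : Fin 1), dxM et t x (.inl i) (.inl j)
        = (κ : ℂ) * ((1 / ((n : ℂ) + 1) - 1) * Complex.I * Dp) := by
      intro i j
      have hfun : (fun y => et t y (Sum.inl i) (Sum.inl j))
          = fun y => (κ : ℂ) * ((1 / ((n : ℂ) + 1) - 1) * Complex.I * ((hpar t y : ℝ) : ℂ)) := by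
        funext y; rw [het]; simp only [Matrix.smul_apply, blk_a11, smul_eq_mul]
      show deriv _ x = _
      rw [hfun]
      exact ((Hp.const_mul _).const_mul _).deriv
    have dEt12 : ∀ (i : Fin 1) (j : Fin n), dxM et t x (.inl i) (.inr j)
        = (κ : ℂ) * dxV hp t x j := by
      intro i j
      have hfun : (fun y => et t y (Sum.inl i) (Sum.inr j))
          = fun y => (κ : ℂ) * hp t y j := by
        funext y; rw [het]; simp only [Matrix.smul_apply, blk_a12, smul_eq_mul]
      show deriv _ x = _
      rw [hfun]
      exact ((Hh j).const_mul _).deriv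
    have dEt21 : ∀ (i : Fin n) (j : Fin 1), dxM et t x (.inr i) (.inl j)
        = (κ : ℂ) * -(star (dxV hp t x i)) := by
      intro i j
      have hfun : (fun y => et t y (Sum.inr i) (Sum.inl j))
          = fun y => (κ : ℂ) * -(star (hp t y i)) := by
        funext y; rw [het]
        simp only [Matrix.smul_apply, blk_a21, smul_eq_mul, starRingEnd_apply]
      show deriv _ x = _
      rw [hfun]
      exact (((Hh i).star).neg.const_mul _).deriv
    have dEt22 : ∀ (i j : Fin n), dxM et t x (.inr i) (.inr j)
        = (κ : ℂ) * dxM hb t x i j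
          + ((κ : ℂ) * Complex.I * ((1 : Matrix (Fin n) (Fin n) ℂ) i j) / ((n : ℂ) + 1)) * Dp := by
      intro i j
      have hfun : (fun y => et t y (Sum.inr i) (Sum.inr j))
          = fun y => (κ : ℂ) * hb t y i j
            + ((κ : ℂ) * Complex.I * ((1 : Matrix (Fin n) (Fin n) ℂ) i j) / ((n : ℂ) + 1))
              * ((hpar t y : ℝ) : ℂ) := by
        funext y; rw [het]
        simp only [blk_a22, Matrix.smul_apply, smul_eq_mul, Matrix.add_apply]
        ring
      show deriv _ x = _
      rw [hfun]
      exact (((Hb i j).const_mul _).add (Hp.const_mul _)).deriv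
    have hdt0 : ∀ (M : Matrix (Idx n) (Idx n) ℂ) (i j : Idx n), dtM (fun _ _ => M) t x i j = 0 := by
      intro M i j; simp [dtM]
    have Edel : ∀ (f : Fin n → ℂ) (c : ℂ) (j : Fin n),
        (∑ k, f k * (c * (1 : Matrix (Fin n) (Fin n) ℂ) k j)) = c * f j := by
      intro f c j
      rw [show (∑ k, f k * (c * (1 : Matrix (Fin n) (Fin n) ℂ) k j))
          = ∑ k, (if k = j then c * f j else 0) from
        Finset.sum_congr rfl fun k _ => by
          by_cases hkj : k = j
          · subst hkj; simp [Matrix.one_apply]; try ring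
          · simp [Matrix.one_apply, hkj]]
      simp
    have Edel' : ∀ (f : Fin n → ℂ) (c : ℂ) (i : Fin n),
        (∑ k, c * (1 : Matrix (Fin n) (Fin n) ℂ) i k * f k) = c * f i := by
      intro f c i
      rw [show (∑ k, c * (1 : Matrix (Fin n) (Fin n) ℂ) i k * f k)
          = ∑ k, (if k = i then c * f i else 0) from
        Finset.sum_congr rfl fun k _ => by
          by_cases hki : k = i
          · subst hki; simp [Matrix.one_apply]; try ring
          · simp [Matrix.one_apply, hki, Ne.symm hki]]
      simp
    have Esplit : ∀ (j : Fin n),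
        (∑ k, v t x k * ((κ : ℂ) * (hb t x k j
            + Complex.I * (hpar t x : ℂ) / ((n : ℂ) + 1)
              * (1 : Matrix (Fin n) (Fin n) ℂ) k j)))
          = (κ : ℂ) * contr (v t x) (hb t x) j
            + (κ : ℂ) * (Complex.I * (hpar t x : ℂ) / ((n : ℂ) + 1)) * v t x j := by
      intro j
      rw [show (∑ k, v t x k * ((κ : ℂ) * (hb t x k j
            + Complex.I * (hpar t x : ℂ) / ((n : ℂ) + 1)
              * (1 : Matrix (Fin n) (Fin n) ℂ) k j)))
          = ∑ k, ((κ : ℂ) * (v t x k * hb t x k j)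
            + if k = j then (κ : ℂ) * (Complex.I * (hpar t x : ℂ) / ((n : ℂ) + 1))
                * v t x j else 0) from
        Finset.sum_congr rfl fun k _ => by
          by_cases hkj : k = j
          · subst hkj; simp [Matrix.one_apply]; try ring
          · simp [Matrix.one_apply, hkj]; try ring]
      rw [Finset.sum_add_distrib, ← Finset.mul_sum]
      simp [contr]
    have hS : ∀ i j, (dxM et t x - dtM (fun _ _ => ex) t x
        + (ωx t x * et t x - et t x * ωx t x)
        - (ωt t x * ex - ex * ωt t x)) i j
      = (κ : ℂ) * blk
          ((1 / ((n : ℂ) + 1) - 1) * Complex.I * Dp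
            + dotv (hp t x) (cvec (v t x)) - dotv (v t x) (cvec (hp t x)))
          (fun k => dxV hp t x k + contr (v t x) (hb t x) k
            + Complex.I * (hpar t x : ℂ) * v t x k - Complex.I * ϖ t x k)
          (fun i => -(starRingEnd ℂ (dxV hp t x i))
            + Complex.I * (hpar t x : ℂ) * starRingEnd ℂ (v t x i)
            + (∑ l, hb t x i l * starRingEnd ℂ (v t x l))
            - Complex.I * starRingEnd ℂ (ϖ t x i))
          (Matrix.of fun j k => dxM hb t x j k
            + Complex.I * Dp / ((n : ℂ) + 1) * ((1 : Matrix (Fin n) (Fin n) ℂ) j k)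
            + starRingEnd ℂ (hp t x j) * v t x k - starRingEnd ℂ (v t x j) * hp t x k)
          i j := by
      intro i j
      rcases i with i | i <;> rcases j with j | j <;>
        simp only [Matrix.sub_apply, Matrix.add_apply, mul_apply_idx, hdt0,
          hωx, het, hωt, hex, blk_a11, blk_a12, blk_a21, blk_a22,
          Matrix.smul_apply, smul_eq_mul, Pi.zero_apply, Matrix.zero_apply,
          Matrix.add_apply, mul_zero, zero_mul, add_zero, zero_add, sub_zero,
          Finset.sum_const_zero,
          dEt11, dEt12, dEt21, dEt22, Matrix.of_apply]
      · simp only [Matrix.one_apply, contr, dotv, cvec, mul_ite, ite_mul,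
          mul_add, add_mul, mul_one, mul_zero, zero_mul, mul_neg, neg_mul,
          Finset.sum_add_distrib, Finset.sum_neg_distrib, Finset.sum_ite_eq,
          Finset.sum_ite_eq', Finset.mem_univ, if_true, Finset.mul_sum,
          Finset.sum_sub_distrib, starRingEnd_apply]
        field_simp
        ring_nf
        try simp only [Finset.mul_sum]
        try ring_nf
      · rw [Esplit j, Edel (ϖ t x) (Complex.I * (κ : ℂ) / ((n : ℂ) + 1)) j]
        field_simp
        ring
      · simp only [Matrix.one_apply, contr, dotv, cvec, mul_ite, ite_mul,
          mul_add, add_mul, mul_one, mul_zero, zero_mul, mul_neg, neg_mul,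
          Finset.sum_add_distrib, Finset.sum_neg_distrib, Finset.sum_ite_eq,
          Finset.sum_ite_eq', Finset.mem_univ, if_true, Finset.mul_sum,
          Finset.sum_sub_distrib, starRingEnd_apply]
        field_simp
        ring_nf
        try simp only [Finset.mul_sum]
        try ring_nf
      · rw [Edel (fun k => Θ t x i k) (Complex.I * (κ : ℂ) / ((n : ℂ) + 1)) j,
          Edel' (fun k => Θ t x k j) (Complex.I * (κ : ℂ) / ((n : ℂ) + 1)) i]
        ring
    constructor
    · intro h
      have hE : ∀ i j, ((κ : ℂ) * blk
          ((1 / ((n : ℂ) + 1) - 1) * Complex.I * Dp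
            + dotv (hp t x) (cvec (v t x)) - dotv (v t x) (cvec (hp t x)))
          (fun k => dxV hp t x k + contr (v t x) (hb t x) k
            + Complex.I * (hpar t x : ℂ) * v t x k - Complex.I * ϖ t x k)
          (fun i => -(starRingEnd ℂ (dxV hp t x i))
            + Complex.I * (hpar t x : ℂ) * starRingEnd ℂ (v t x i)
            + (∑ l, hb t x i l * starRingEnd ℂ (v t x l))
            - Complex.I * starRingEnd ℂ (ϖ t x i))
          (Matrix.of fun j k => dxM hb t x j k
            + Complex.I * Dp / ((n : ℂ) + 1) * ((1 : Matrix (Fin n) (Fin n) ℂ) j k)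
            + starRingEnd ℂ (hp t x j) * v t x k - starRingEnd ℂ (v t x j) * hp t x k)
          i j) = 0 := by
        intro i j
        have h2 := congrFun (congrFun h i) j
        rw [hS i j] at h2
        simpa using h2
      have hE' : ∀ i j, (blk
          ((1 / ((n : ℂ) + 1) - 1) * Complex.I * Dp
            + dotv (hp t x) (cvec (v t x)) - dotv (v t x) (cvec (hp t x)))
          (fun k => dxV hp t x k + contr (v t x) (hb t x) k
            + Complex.I * (hpar t x : ℂ) * v t x k - Complex.I * ϖ t x k)
          (fun i => -(starRingEnd ℂ (dxV hp t x i))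
            + Complex.I * (hpar t x : ℂ) * starRingEnd ℂ (v t x i)
            + (∑ l, hb t x i l * starRingEnd ℂ (v t x l))
            - Complex.I * starRingEnd ℂ (ϖ t x i))
          (Matrix.of fun j k => dxM hb t x j k
            + Complex.I * Dp / ((n : ℂ) + 1) * ((1 : Matrix (Fin n) (Fin n) ℂ) j k)
            + starRingEnd ℂ (hp t x j) * v t x k - starRingEnd ℂ (v t x j) * hp t x k)
          i j) = 0 :=
        fun i j => (mul_eq_zero.mp (hE i j)).resolve_left hκ0
      have hA : (1 / ((n : ℂ) + 1) - 1) * Complex.I * Dp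
          + dotv (hp t x) (cvec (v t x)) - dotv (v t x) (cvec (hp t x)) = 0 := by
        simpa only [blk_a11] using hE' (Sum.inl 0) (Sum.inl 0)
      refine ⟨hA, ?_, ?_⟩
      · ext j k
        have hD := hE' (Sum.inr j) (Sum.inr k)
        simp only [blk_a22, Matrix.of_apply] at hD
        simp only [Matrix.sub_apply, Matrix.add_apply, Matrix.smul_apply, smul_eq_mul,
          outer, Matrix.of_apply, cvec, Matrix.zero_apply]
        field_simp at hD hA ⊢
        apply mul_left_cancel₀ hN0
        rw [mul_zero]
        linear_combination (n : ℂ) * hD + (1 : Matrix (Fin n) (Fin n) ℂ) j k * hA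
      · intro j
        have hB := hE' (Sum.inl 0) (Sum.inr j)
        simp only [blk_a12] at hB
        linear_combination -hB
    · rintro ⟨h1, h2, h3⟩
      ext i j
      rw [hS i j, Matrix.zero_apply]
      apply mul_eq_zero_of_right
      rcases i with i | i <;> rcases j with j | j <;>
        simp only [blk_a11, blk_a12, blk_a21, blk_a22, Matrix.of_apply]
      · exact h1
      · linear_combination -(h3 j)
      · have hc := congrArg (starRingEnd ℂ) (h3 i)
        simp only [map_sub, _root_.map_mul, map_zero, Complex.conj_I, Complex.conj_ofReal,
          contr, map_sum, hconj] at hc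
        have hsum : (∑ l, starRingEnd ℂ (v t x l) * -(hb t x i l))
            = -∑ l, hb t x i l * starRingEnd ℂ (v t x l) := by
          rw [← Finset.sum_neg_distrib]
          exact Finset.sum_congr rfl fun l _ => by ring
        rw [hsum] at hc
        linear_combination hc
      · have hd := congrFun (congrFun h2 i) j
        simp only [Matrix.sub_apply, Matrix.add_apply, Matrix.smul_apply, smul_eq_mul,
          outer, Matrix.of_apply, cvec, Matrix.zero_apply] at hd
        field_simp at hd h1 ⊢
        apply mul_left_cancel₀ hn0
        rw [zero_mul, mul_zero]
        linear_combination ((n : ℂ) + 1) * hd - (1 : Matrix (Fin n) (Fin n) ℂ) i j * h1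
  constructor
  · intro H t x; exact (main t x).mp (H t x)
  · intro H t x; exact (main t x).mpr (H t x)
end
end

section
/- Let N ≥ 2 and κ := √(2N/(N−1)). Let v, ϖ, h⊥ : ℝ² → ℂ^{N−1}, h∥, θ : ℝ² → ℝ, 𝐡⊥ : ℝ² → su(N−1), Θ : ℝ² → u(N−1) be smooth with θ = −i·tr Θ, and define e_x := (iκ/N)·diag(1−N,1,…,1), ω_x := [[0, v],[−v†, 0]], e_t := κ·[[(1/N − 1)·i·h∥, h⊥],[−h⊥†, 𝐡⊥ + (i·h∥/N)·1_{N−1}]], ω_t := [[−iθ, ϖ],[−ϖ†, Θ]]. Then the constant-curvature Cartan structure equation ∂_x ω_t − ∂_t ω_x + [ω_x, ω_t] = −[e_x, e_t] holds at every point of ℝ² if and only if the following three equations hold at every point: (i) ∂_t v − ∂_x ϖ − v⌟Θ − i·θ·v = −κ²·i·h⊥; (ii) ∂_x Θ + ϖ̄⊗v − v̄⊗ϖ = 0; (iii) i·∂_x θ + v·ϖ̄ − ϖ·v̄ = 0. -/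
open Matrix

noncomputable section

@[simp] lemma blk11 {n : ℕ} (z : ℂ) (p q : Fin n → ℂ) (M) (i j : Fin 1) :
    blk z p q M (Sum.inl i) (Sum.inl j) = z := rfl
@[simp] lemma blk12 {n : ℕ} (z : ℂ) (p q : Fin n → ℂ) (M) (i : Fin 1) (j : Fin n) :
    blk z p q M (Sum.inl i) (Sum.inr j) = p j := rfl
@[simp] lemma blk21 {n : ℕ} (z : ℂ) (p q : Fin n → ℂ) (M) (i : Fin n) (j : Fin 1) :
    blk z p q M (Sum.inr i) (Sum.inl j) = q i := rfl
@[simp] lemma blk22 {n : ℕ} (z : ℂ) (p q : Fin n → ℂ) (M) (i j : Fin n) :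
    blk z p q M (Sum.inr i) (Sum.inr j) = M i j := rfl

lemma blk_eq_blk {n : ℕ} {z z' : ℂ} {p p' q q' : Fin n → ℂ} {M M'} :
    blk z p q M = blk z' p' q' M' ↔
      z = z' ∧ (∀ j, p j = p' j) ∧ (∀ j, q j = q' j) ∧ M = M' := by
  constructor
  · intro h
    exact ⟨congrFun (congrFun h (Sum.inl 0)) (Sum.inl 0),
      fun j => congrFun (congrFun h (Sum.inl 0)) (Sum.inr j),
      fun j => congrFun (congrFun h (Sum.inr j)) (Sum.inl 0),
      Matrix.ext fun j k => congrFun (congrFun h (Sum.inr j)) (Sum.inr k)⟩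
  · rintro ⟨h1, h2, h3, h4⟩
    ext i j
    cases i <;> cases j <;> simp [h1, h2, h3, h4]

lemma diffX {F : Type*} [NormedAddCommGroup F] [NormedSpace ℝ F]
    {f : ℝ × ℝ → F} (hf : ContDiff ℝ (⊤ : ℕ∞) f) (t x : ℝ) :
    DifferentiableAt ℝ (fun y => f (t, y)) x :=
  (hf.differentiable (by simp) (t, x)).comp x
    (by fun_prop : DifferentiableAt ℝ (fun y : ℝ => (t, y)) x)

/-- for the SU(N)-parallel frame data, the constant-curvature
Cartan structure equation ∂_x ω_t − ∂_t ω_x + [ω_x,ω_t] = −[e_x,e_t] is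
equivalent to the three component equations (i), (ii), (iii). -/
theorem statement10 (n : ℕ) (hn : 1 ≤ n) (κ : ℝ)
    (hκ : κ = Real.sqrt (2 * ((n : ℝ) + 1) / n))
    (v ϖ hp : ℝ → ℝ → Fin n → ℂ) (hpar θf : ℝ → ℝ → ℝ)
    (hb Θ : ℝ → ℝ → Matrix (Fin n) (Fin n) ℂ)
    (hv : ∀ j, ContDiff ℝ (⊤ : ℕ∞) fun q : ℝ × ℝ => v q.1 q.2 j)
    (hϖ : ∀ j, ContDiff ℝ (⊤ : ℕ∞) fun q : ℝ × ℝ => ϖ q.1 q.2 j)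
    (hhp : ∀ j, ContDiff ℝ (⊤ : ℕ∞) fun q : ℝ × ℝ => hp q.1 q.2 j)
    (hhpar : ContDiff ℝ (⊤ : ℕ∞) fun q : ℝ × ℝ => hpar q.1 q.2)
    (hθf : ContDiff ℝ (⊤ : ℕ∞) fun q : ℝ × ℝ => θf q.1 q.2)
    (hhb : ∀ j k, ContDiff ℝ (⊤ : ℕ∞) fun q : ℝ × ℝ => hb q.1 q.2 j k)
    (hΘs : ∀ j k, ContDiff ℝ (⊤ : ℕ∞) fun q : ℝ × ℝ => Θ q.1 q.2 j k)
    (hbsu : ∀ t x, (hb t x)ᴴ = -(hb t x) ∧ (hb t x).trace = 0)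
    (hΘu : ∀ t x, (Θ t x)ᴴ = -(Θ t x))
    (hθtr : ∀ t x, ((θf t x : ℂ)) = -Complex.I * (Θ t x).trace)
    (ex : Matrix (Idx n) (Idx n) ℂ)
    (hex : ex = (Complex.I * (κ : ℂ) / ((n : ℂ) + 1)) • blk (1 - ((n : ℂ) + 1)) 0 0 1)
    (ωx et ωt : ℝ → ℝ → Matrix (Idx n) (Idx n) ℂ)
    (hωx : ∀ t x, ωx t x = blk 0 (v t x) (fun j => -(starRingEnd ℂ (v t x j))) 0)
    (het : ∀ t x, et t x = (κ : ℂ) •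
      blk ((1 / ((n : ℂ) + 1) - 1) * Complex.I * (hpar t x : ℂ)) (hp t x)
        (fun j => -(starRingEnd ℂ (hp t x j)))
        (hb t x + ((Complex.I * (hpar t x : ℂ)) / ((n : ℂ) + 1)) •
          (1 : Matrix (Fin n) (Fin n) ℂ)))
    (hωt : ∀ t x, ωt t x = blk (-Complex.I * (θf t x : ℂ)) (ϖ t x)
        (fun j => -(starRingEnd ℂ (ϖ t x j))) (Θ t x)) :
    (∀ t x, dxM ωt t x - dtM ωx t x
        + (ωx t x * ωt t x - ωt t x * ωx t x)
        = -(ex * et t x - et t x * ex))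
    ↔ (∀ t x,
        (∀ j, dtV v t x j - dxV ϖ t x j - contr (v t x) (Θ t x) j
          - Complex.I * (θf t x : ℂ) * v t x j
          = -((κ : ℂ) ^ 2) * Complex.I * hp t x j) ∧
        (dxM Θ t x + outer (cvec (ϖ t x)) (v t x)
          - outer (cvec (v t x)) (ϖ t x) = 0) ∧
        (Complex.I * ((deriv (fun y => θf t y) x : ℝ) : ℂ)
          + dotv (v t x) (cvec (ϖ t x)) - dotv (ϖ t x) (cvec (v t x)) = 0)) := by
  have hn1 : ((n : ℂ) + 1) ≠ 0 := Nat.cast_add_one_ne_zero n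
  refine forall₂_congr fun t x => ?_
  -- derivative of the (1,1) entry of ωt
  have hdθ : deriv (fun y => -Complex.I * ((θf t y : ℝ) : ℂ)) x
      = -Complex.I * ((deriv (fun y => θf t y) x : ℝ) : ℂ) := by
    have h1 : HasDerivAt (fun y => θf t y) (deriv (fun y => θf t y) x) x :=
      (diffX hθf t x).hasDerivAt
    exact (h1.ofReal_comp.const_mul (-Complex.I)).deriv
  have hL : dxM ωt t x - dtM ωx t x + (ωx t x * ωt t x - ωt t x * ωx t x)
      = blk
        (-Complex.I * ((deriv (fun y => θf t y) x : ℝ) : ℂ)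
          - dotv (v t x) (cvec (ϖ t x)) + dotv (ϖ t x) (cvec (v t x)))
        (fun k => dxV ϖ t x k - dtV v t x k + contr (v t x) (Θ t x) k
          + Complex.I * (θf t x : ℂ) * v t x k)
        (fun j => -(starRingEnd ℂ (dxV ϖ t x j)) + starRingEnd ℂ (dtV v t x j)
          + Complex.I * (θf t x : ℂ) * starRingEnd ℂ (v t x j)
          + ∑ m, Θ t x j m * starRingEnd ℂ (v t x m))
        (dxM Θ t x + outer (cvec (ϖ t x)) (v t x) - outer (cvec (v t x)) (ϖ t x)) := by
    ext i j
    cases i with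
    | inl i =>
      cases j with
      | inl j =>
        simp only [Matrix.add_apply, Matrix.sub_apply, dxM, dtM, Matrix.of_apply,
          hωt, hωx, Matrix.mul_apply, Fintype.sum_sum_type, blk11, blk12, blk21, blk22,
          Finset.univ_unique, Finset.sum_singleton, dotv, cvec, dxV, dtV, hdθ]
        simp only [mul_neg, neg_mul, zero_mul, mul_zero, deriv_const, Finset.sum_neg_distrib,
          Finset.sum_const_zero, starRingEnd_apply]
        ring
      | inr j =>
        simp only [Matrix.add_apply, Matrix.sub_apply, dxM, dtM, Matrix.of_apply,
          hωt, hωx, Matrix.mul_apply, Fintype.sum_sum_type, blk11, blk12, blk21, blk22,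
          Finset.univ_unique, Finset.sum_singleton, contr, dxV, dtV]
        simp only [Matrix.zero_apply, mul_zero, zero_mul, Finset.sum_const_zero,
          neg_mul, mul_neg, starRingEnd_apply]
        ring
    | inr i =>
      cases j with
      | inl j =>
        simp only [Matrix.add_apply, Matrix.sub_apply, dxM, dtM, Matrix.of_apply,
          hωt, hωx, Matrix.mul_apply, Fintype.sum_sum_type, blk11, blk12, blk21, blk22,
          Finset.univ_unique, Finset.sum_singleton, dxV, dtV, starRingEnd_apply,
          deriv.fun_neg, deriv.star]
        simp only [Matrix.zero_apply, mul_zero, zero_mul, Finset.sum_const_zero,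
          neg_mul, mul_neg, neg_neg, Finset.sum_neg_distrib, Finset.sum_sub_distrib,
          Finset.sum_const_zero]
        ring
      | inr j =>
        simp only [Matrix.add_apply, Matrix.sub_apply, dxM, dtM, Matrix.of_apply,
          hωt, hωx, Matrix.mul_apply, Fintype.sum_sum_type, blk11, blk12, blk21, blk22,
          Finset.univ_unique, Finset.sum_singleton, outer, cvec, starRingEnd_apply]
        simp only [Matrix.zero_apply, mul_zero, zero_mul, Finset.sum_const_zero,
          neg_mul, mul_neg, deriv_const, Finset.sum_neg_distrib, Finset.sum_sub_distrib,
          Finset.sum_const_zero]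
        ring
  have hR : -(ex * et t x - et t x * ex)
      = blk 0 (fun k => Complex.I * (κ : ℂ) ^ 2 * hp t x k)
          (fun j => Complex.I * (κ : ℂ) ^ 2 * starRingEnd ℂ (hp t x j)) 0 := by
    ext i j
    cases i with
    | inl i =>
      cases j with
      | inl j =>
        simp only [Matrix.neg_apply, Matrix.sub_apply, hex, het, Matrix.mul_apply,
          Matrix.smul_apply, smul_eq_mul, Fintype.sum_sum_type, blk11, blk12, blk21, blk22,
          Finset.univ_unique, Finset.sum_singleton, Pi.zero_apply, Matrix.add_apply,
          Matrix.one_apply, Matrix.zero_apply]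
        simp only [mul_zero, zero_mul, mul_ite, ite_mul, mul_one, one_mul,
          Finset.sum_const_zero]
        ring
      | inr j =>
        simp only [Matrix.neg_apply, Matrix.sub_apply, hex, het, Matrix.mul_apply,
          Matrix.smul_apply, smul_eq_mul, Fintype.sum_sum_type, blk11, blk12, blk21, blk22,
          Finset.univ_unique, Finset.sum_singleton, Pi.zero_apply, Matrix.add_apply,
          Matrix.one_apply, Matrix.zero_apply]
        simp only [mul_zero, zero_mul, mul_ite, ite_mul, mul_one, one_mul, zero_add,
          Finset.sum_const_zero, Finset.sum_ite_eq, Finset.sum_ite_eq', Finset.mem_univ,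
          if_true]
        field_simp
        ring
    | inr i =>
      cases j with
      | inl j =>
        simp only [Matrix.neg_apply, Matrix.sub_apply, hex, het, Matrix.mul_apply,
          Matrix.smul_apply, smul_eq_mul, Fintype.sum_sum_type, blk11, blk12, blk21, blk22,
          Finset.univ_unique, Finset.sum_singleton, Pi.zero_apply, Matrix.add_apply,
          Matrix.one_apply, Matrix.zero_apply]
        simp only [mul_zero, zero_mul, mul_ite, ite_mul, mul_one, one_mul, zero_add,
          mul_neg, neg_mul, Finset.sum_const_zero, Finset.sum_ite_eq, Finset.sum_ite_eq',
          Finset.mem_univ, if_true]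
        simp only [Finset.sum_neg_distrib, Finset.sum_ite_eq, Finset.sum_ite_eq',
          Finset.mem_univ, if_true]
        field_simp
        ring
      | inr j =>
        simp only [Matrix.neg_apply, Matrix.sub_apply, hex, het, Matrix.mul_apply,
          Matrix.smul_apply, smul_eq_mul, Fintype.sum_sum_type, blk11, blk12, blk21, blk22,
          Finset.univ_unique, Finset.sum_singleton, Pi.zero_apply, Matrix.add_apply,
          Matrix.one_apply, Matrix.zero_apply]
        simp only [mul_zero, zero_mul, mul_ite, ite_mul, mul_one, one_mul, zero_add,
          mul_add, Finset.sum_add_distrib, Finset.sum_const_zero, Finset.sum_ite_eq,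
          Finset.sum_ite_eq', Finset.mem_univ, if_true]
        split_ifs <;> ring
  rw [hL, hR, blk_eq_blk]
  constructor
  · rintro ⟨h1, h2, h3, h4⟩
    exact ⟨fun j => by linear_combination -(h2 j), h4, by linear_combination -h1⟩
  · rintro ⟨h1, h2, h3⟩
    refine ⟨by linear_combination -h3, fun k => by linear_combination -(h1 k),
      fun j => ?_, h2⟩
    have hc : (starRingEnd ℂ) (contr (v t x) (Θ t x) j)
        = -∑ m, Θ t x j m * starRingEnd ℂ (v t x m) := by
      rw [contr, map_sum, ← Finset.sum_neg_distrib]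
      refine Finset.sum_congr rfl fun m _ => ?_
      have hth : (starRingEnd ℂ) (Θ t x m j) = -(Θ t x j m) := by
        have h := congrFun (congrFun (hΘu t x) j) m
        rw [Matrix.conjTranspose_apply, Matrix.neg_apply] at h
        exact h
      rw [_root_.map_mul, hth]; ring
    have hs := congrArg (starRingEnd ℂ) (h1 j)
    simp only [map_sub, map_add, _root_.map_mul, map_neg, map_pow, Complex.conj_I,
      Complex.conj_ofReal, hc] at hs
    linear_combination hs
end
end

section
/- Let N ≥ 2. Let v₁, v₂, ϖ₁, ϖ₂, h₁, h₂ : ℝ² → ℝ^{N−1} (row-vector valued), h∥, θ : ℝ² → ℝ, and 𝐡⊥, Θ : ℝ² → so(N−1) be smooth functions of (t,x). Define the so(N+1)-valued maps e_x := [[J, 0],[0, 0]] (constant), ω_x := [[0, V],[−Vᵀ, 0]] where V is the 2×(N−1) matrix with rows v₁, v₂; e_t := [[h∥·J, H],[−Hᵀ, 𝐡⊥]] where H has rows h₁, h₂; and ω_t := [[θ·J, W],[−Wᵀ, Θ]] where W has rows ϖ₁, ϖ₂. Set v := v₁ + i·v₂, h⊥ := h₁ + i·h₂, ϖ := ϖ₁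 + i·ϖ₂ (ℂ^{N−1}-valued). Then the zero-torsion Cartan structure equation ∂_x e_t − ∂_t e_x + [ω_x, e_t] − [ω_t, e_x] = 0 holds at every point of ℝ² if and only if the following three equations hold at every point: (i) 2i·∂_x h∥ − h⊥·v̄ + v·h̄⊥ = 0; (ii) 2·∂_x 𝐡⊥ + h̄⊥⊗v + h⊥⊗v̄ − v̄⊗h⊥ − v⊗h̄⊥ = 0; (iii) i·ϖ − ∂_x h⊥ − i·h∥·v − v⌟𝐡⊥ = 0. -/
open Matrix

noncomputable section

/-- Index type for (N+1)×(N+1) matrices, N = n+1, split as {1,2} ⊕ the rest. -/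
abbrev Jdx (n : ℕ) := Fin 2 ⊕ Fin n

/-- J = [[0,1],[−1,0]]. -/
def Jm : Matrix (Fin 2) (Fin 2) ℝ := !![0, 1; -1, 0]

/-- E = [[J,0],[0,0]] ∈ so(N+1). -/
def Em (n : ℕ) : Matrix (Jdx n) (Jdx n) ℝ := Matrix.fromBlocks Jm 0 0 0

/-- The 2×(N−1) matrix with prescribed rows. -/
def row2 {n : ℕ} (a b : Fin n → ℝ) : Matrix (Fin 2) (Fin n) ℝ := Matrix.of ![a, b]

/-- Entrywise ∂_x of a real-matrix-valued function of (t,x). -/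
def dxMR {m k : Type*} (f : ℝ → ℝ → Matrix m k ℝ) (t x : ℝ) : Matrix m k ℝ :=
  Matrix.of fun i j => deriv (fun y => f t y i j) x

/-- Entrywise ∂_t of a real-matrix-valued function of (t,x). -/
def dtMR {m k : Type*} (f : ℝ → ℝ → Matrix m k ℝ) (t x : ℝ) : Matrix m k ℝ :=
  Matrix.of fun i j => deriv (fun s => f s x i j) t

private lemma diff_slice {f : ℝ → ℝ → ℝ} (hf : ContDiff ℝ (⊤ : ℕ∞) fun q : ℝ × ℝ => f q.1 q.2)
    (t x : ℝ) : DifferentiableAt ℝ (fun y => f t y) x := by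
  have h := (hf.differentiable (by simp)).differentiableAt (x := (t, x))
  exact h.comp x (DifferentiableAt.prodMk (differentiableAt_const t) differentiableAt_id)

private lemma deriv_ofReal_add_I {f g : ℝ → ℝ} {x : ℝ} (hf : DifferentiableAt ℝ f x)
    (hg : DifferentiableAt ℝ g x) :
    deriv (fun y => (f y : ℂ) + Complex.I * (g y : ℂ)) x
      = ((deriv f x : ℝ) : ℂ) + Complex.I * ((deriv g x : ℝ) : ℂ) :=
  ((hf.hasDerivAt.ofReal_comp).add ((hg.hasDerivAt.ofReal_comp).const_mul Complex.I)).deriv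

private lemma auxA {n : ℕ} (v1 v2 h1 h2 : Fin n → ℝ) (d : ℝ) :
    (2 * Complex.I * (d : ℂ)
      - dotv (fun j => (h1 j : ℂ) + Complex.I * h2 j) (cvec fun j => (v1 j : ℂ) + Complex.I * v2 j)
      + dotv (fun j => (v1 j : ℂ) + Complex.I * v2 j) (cvec fun j => (h1 j : ℂ) + Complex.I * h2 j) = 0)
    ↔ d + ∑ j, (h1 j * v2 j - h2 j * v1 j) = 0 := by
  have key : ∀ j ∈ (Finset.univ : Finset (Fin n)),
      ((v1 j : ℂ) + Complex.I * v2 j) * (starRingEnd ℂ) ((h1 j:ℂ) + Complex.I*h2 j)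
      - ((h1 j : ℂ) + Complex.I * h2 j) * (starRingEnd ℂ) ((v1 j:ℂ) + Complex.I*v2 j)
      = 2 * Complex.I * ((h1 j * v2 j - h2 j * v1 j : ℝ) : ℂ) := by
    intro j _
    simp only [map_add, _root_.map_mul, Complex.conj_ofReal, Complex.conj_I]
    push_cast; ring
  have e1 : 2 * Complex.I * (d : ℂ)
      - dotv (fun j => (h1 j : ℂ) + Complex.I * h2 j) (cvec fun j => (v1 j : ℂ) + Complex.I * v2 j)
      + dotv (fun j => (v1 j : ℂ) + Complex.I * v2 j) (cvec fun j => (h1 j : ℂ) + Complex.I * h2 j)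
      = 2 * Complex.I * (((d + ∑ j, (h1 j * v2 j - h2 j * v1 j)) : ℝ) : ℂ) := by
    unfold dotv cvec
    rw [show ∀ (a S1 S2 : ℂ), a - S1 + S2 = a + (S2 - S1) from fun a S1 S2 => by ring]
    rw [← Finset.sum_sub_distrib, Finset.sum_congr rfl key]
    push_cast
    rw [mul_add, Finset.mul_sum]
  rw [e1, mul_eq_zero, mul_eq_zero]
  simp [Complex.I_ne_zero]
  norm_cast

private lemma auxB (hj1 hj2 hk1 hk2 vj1 vj2 vk1 vk2 r : ℝ) :
    (2*(r:ℂ) + (starRingEnd ℂ ((hj1:ℂ)+Complex.I*hj2))*((vk1:ℂ)+Complex.I*vk2)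
      + ((hj1:ℂ)+Complex.I*hj2)*(starRingEnd ℂ ((vk1:ℂ)+Complex.I*vk2))
      - (starRingEnd ℂ ((vj1:ℂ)+Complex.I*vj2))*((hk1:ℂ)+Complex.I*hk2)
      - ((vj1:ℂ)+Complex.I*vj2)*(starRingEnd ℂ ((hk1:ℂ)+Complex.I*hk2)) = 0)
    ↔ r + (hj1*vk1 + hj2*vk2) - (vj1*hk1 + vj2*hk2) = 0 := by
  have e1 : 2*(r:ℂ) + (starRingEnd ℂ ((hj1:ℂ)+Complex.I*hj2))*((vk1:ℂ)+Complex.I*vk2)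
      + ((hj1:ℂ)+Complex.I*hj2)*(starRingEnd ℂ ((vk1:ℂ)+Complex.I*vk2))
      - (starRingEnd ℂ ((vj1:ℂ)+Complex.I*vj2))*((hk1:ℂ)+Complex.I*hk2)
      - ((vj1:ℂ)+Complex.I*vj2)*(starRingEnd ℂ ((hk1:ℂ)+Complex.I*hk2))
      = 2 * (((r + (hj1*vk1 + hj2*vk2) - (vj1*hk1 + vj2*hk2)) : ℝ) : ℂ) := by
    simp only [map_add, _root_.map_mul, Complex.conj_ofReal, Complex.conj_I]
    push_cast
    linear_combination (2*(vj2:ℂ)*hk2 - 2*(hj2:ℂ)*vk2) * Complex.I_mul_I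
  rw [e1, mul_eq_zero]
  simp
  norm_cast

private lemma auxC (w1 w2 dh1 dh2 hp v1 v2 s1 s2 : ℝ) :
    (Complex.I*((w1:ℂ)+Complex.I*w2) - (((dh1:ℝ):ℂ) + Complex.I*((dh2:ℝ):ℂ))
      - Complex.I*(hp:ℂ)*((v1:ℂ)+Complex.I*v2) - (((s1:ℝ):ℂ) + Complex.I*((s2:ℝ):ℂ)) = 0)
    ↔ (dh1 + s1 - hp*v2 + w2 = 0 ∧ dh2 + s2 + hp*v1 - w1 = 0) := by
  have e1 : Complex.I*((w1:ℂ)+Complex.I*w2) - (((dh1:ℝ):ℂ) + Complex.I*((dh2:ℝ):ℂ))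
      - Complex.I*(hp:ℂ)*((v1:ℂ)+Complex.I*v2) - (((s1:ℝ):ℂ) + Complex.I*((s2:ℝ):ℂ))
      = -(((dh1 + s1 - hp*v2 + w2 : ℝ)):ℂ) - Complex.I * (((dh2 + s2 + hp*v1 - w1 : ℝ)):ℂ) := by
    push_cast
    linear_combination ((w2:ℂ) - (hp:ℂ)*v2) * Complex.I_mul_I
  rw [e1]
  rw [Complex.ext_iff]
  push_cast
  simp [Complex.ext_iff]
  constructor
  · rintro ⟨a, b⟩; constructor <;> linarith
  · rintro ⟨a, b⟩; constructor <;> linarith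

/-- for the SO(N+1)-parallel frame data, the zero-torsion Cartan
structure equation ∂_x e_t − ∂_t e_x + [ω_x,e_t] − [ω_t,e_x] = 0 is equivalent
to the three complex component equations (i), (ii), (iii). -/
theorem statement11 (n : ℕ) (hn : 1 ≤ n)
    (v1 v2 w1 w2 h1 h2 : ℝ → ℝ → Fin n → ℝ) (hpar θf : ℝ → ℝ → ℝ)
    (hb Θ : ℝ → ℝ → Matrix (Fin n) (Fin n) ℝ)
    (hv1 : ∀ j, ContDiff ℝ (⊤ : ℕ∞) fun q : ℝ × ℝ => v1 q.1 q.2 j)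
    (hv2 : ∀ j, ContDiff ℝ (⊤ : ℕ∞) fun q : ℝ × ℝ => v2 q.1 q.2 j)
    (hw1 : ∀ j, ContDiff ℝ (⊤ : ℕ∞) fun q : ℝ × ℝ => w1 q.1 q.2 j)
    (hw2 : ∀ j, ContDiff ℝ (⊤ : ℕ∞) fun q : ℝ × ℝ => w2 q.1 q.2 j)
    (hh1 : ∀ j, ContDiff ℝ (⊤ : ℕ∞) fun q : ℝ × ℝ => h1 q.1 q.2 j)
    (hh2 : ∀ j, ContDiff ℝ (⊤ : ℕ∞) fun q : ℝ × ℝ => h2 q.1 q.2 j)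
    (hhpar : ContDiff ℝ (⊤ : ℕ∞) fun q : ℝ × ℝ => hpar q.1 q.2)
    (hθf : ContDiff ℝ (⊤ : ℕ∞) fun q : ℝ × ℝ => θf q.1 q.2)
    (hhb : ∀ j k, ContDiff ℝ (⊤ : ℕ∞) fun q : ℝ × ℝ => hb q.1 q.2 j k)
    (hΘs : ∀ j k, ContDiff ℝ (⊤ : ℕ∞) fun q : ℝ × ℝ => Θ q.1 q.2 j k)
    (hbso : ∀ t x, (hb t x)ᵀ = -(hb t x))
    (hΘso : ∀ t x, (Θ t x)ᵀ = -(Θ t x))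
    (ex : Matrix (Jdx n) (Jdx n) ℝ) (hex : ex = Em n)
    (ωx et ωt : ℝ → ℝ → Matrix (Jdx n) (Jdx n) ℝ)
    (hωx : ∀ t x, ωx t x = Matrix.fromBlocks 0 (row2 (v1 t x) (v2 t x))
        (-(row2 (v1 t x) (v2 t x))ᵀ) 0)
    (het : ∀ t x, et t x = Matrix.fromBlocks (hpar t x • Jm)
        (row2 (h1 t x) (h2 t x)) (-(row2 (h1 t x) (h2 t x))ᵀ) (hb t x))
    (hωt : ∀ t x, ωt t x = Matrix.fromBlocks (θf t x • Jm)
        (row2 (w1 t x) (w2 t x)) (-(row2 (w1 t x) (w2 t x))ᵀ) (Θ t x))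
    (vc hc ϖc : ℝ → ℝ → Fin n → ℂ)
    (hvc : ∀ t x j, vc t x j = (v1 t x j : ℂ) + Complex.I * (v2 t x j : ℂ))
    (hhc : ∀ t x j, hc t x j = (h1 t x j : ℂ) + Complex.I * (h2 t x j : ℂ))
    (hϖc : ∀ t x j, ϖc t x j = (w1 t x j : ℂ) + Complex.I * (w2 t x j : ℂ)) :
    (∀ t x, dxMR et t x - dtMR (fun _ _ => ex) t x
        + (ωx t x * et t x - et t x * ωx t x)
        - (ωt t x * ex - ex * ωt t x) = 0)
    ↔ (∀ t x,
        (2 * Complex.I * ((deriv (fun y => hpar t y) x : ℝ) : ℂ)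
          - dotv (hc t x) (cvec (vc t x)) + dotv (vc t x) (cvec (hc t x)) = 0) ∧
        ((2 : ℂ) • ((dxMR hb t x).map fun r => (r : ℂ))
          + outer (cvec (hc t x)) (vc t x) + outer (hc t x) (cvec (vc t x))
          - outer (cvec (vc t x)) (hc t x) - outer (vc t x) (cvec (hc t x)) = 0) ∧
        (∀ j, Complex.I * ϖc t x j - dxV hc t x j
          - Complex.I * (hpar t x : ℂ) * vc t x j
          - contr (vc t x) ((hb t x).map fun r => (r : ℂ)) j = 0)) := by
  refine forall_congr' fun t => forall_congr' fun x => ?_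
  have hB : ∀ j k, hb t x k j = -(hb t x j k) := fun j k => congrFun (congrFun (hbso t x) j) k
  have hvv : vc t x = fun j => (v1 t x j : ℂ) + Complex.I * v2 t x j := funext fun j => hvc t x j
  have hhh : hc t x = fun j => (h1 t x j : ℂ) + Complex.I * h2 t x j := funext fun j => hhc t x j
  have hww : ϖc t x = fun j => (w1 t x j : ℂ) + Complex.I * w2 t x j := funext fun j => hϖc t x j
  have main : dxMR et t x - dtMR (fun _ _ => ex) t x
        + (ωx t x * et t x - et t x * ωx t x)
        - (ωt t x * ex - ex * ωt t x)
      = Matrix.fromBlocks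
          ((deriv (fun y => hpar t y) x + ∑ j, (h1 t x j * v2 t x j - h2 t x j * v1 t x j)) • Jm)
          (row2 (fun j => deriv (fun y => h1 t y j) x + ∑ k, v1 t x k * hb t x k j - hpar t x * v2 t x j + w2 t x j)
                (fun j => deriv (fun y => h2 t y j) x + ∑ k, v2 t x k * hb t x k j + hpar t x * v1 t x j - w1 t x j))
          (-(row2 (fun j => deriv (fun y => h1 t y j) x + ∑ k, v1 t x k * hb t x k j - hpar t x * v2 t x j + w2 t x j)
                (fun j => deriv (fun y => h2 t y j) x + ∑ k, v2 t x k * hb t x k j + hpar t x * v1 t x j - w1 t x j))ᵀ)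
          (Matrix.of fun j k => deriv (fun y => hb t y j k) x
             + (h1 t x j * v1 t x k + h2 t x j * v2 t x k)
             - (v1 t x j * h1 t x k + v2 t x j * h2 t x k)) := by
    ext i j
    rcases i with a | j' <;> rcases j with b | k' <;>
      simp only [dxMR, dtMR, het, hωx, hωt, hex, Em, Matrix.sub_apply, Matrix.add_apply,
        Matrix.mul_apply, Fintype.sum_sum_type, Fin.sum_univ_two,
        Matrix.fromBlocks_apply₁₁, Matrix.fromBlocks_apply₁₂, Matrix.fromBlocks_apply₂₁,
        Matrix.fromBlocks_apply₂₂, Matrix.smul_apply, smul_eq_mul, Matrix.of_apply,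
        Matrix.neg_apply, Matrix.transpose_apply, Matrix.zero_apply,
        mul_zero, zero_mul, mul_one, mul_neg_one, neg_zero, add_zero, zero_add, sub_zero,
        zero_sub, neg_neg, deriv_const']
    · fin_cases a <;> fin_cases b <;>
        simp [Jm, row2, Matrix.vecHead, Matrix.vecTail, deriv_const', mul_comm] <;> ring
    · fin_cases a <;>
        simp [Jm, row2, Matrix.vecHead, Matrix.vecTail, deriv_const', mul_comm] <;> ring
    · have hs : ∀ u : Fin n → ℝ, (∑ k, u k * hb t x j' k) = -∑ k, u k * hb t x k j' := by
        intro u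
        rw [← Finset.sum_neg_distrib]
        exact Finset.sum_congr rfl fun k _ => by rw [hB k j']; ring
      fin_cases b <;>
        simp [Jm, row2, Matrix.vecHead, Matrix.vecTail, deriv_const', mul_comm] <;>
        rw [hs] <;> ring
    · simp [Jm, row2, Matrix.vecHead, Matrix.vecTail, deriv_const', mul_comm]
      ring
  rw [main, show (0 : Matrix (Jdx n) (Jdx n) ℝ) = Matrix.fromBlocks 0 0 0 0 from
    Matrix.fromBlocks_zero.symm, Matrix.fromBlocks_inj]
  have hJm : Jm ≠ 0 := by
    intro h
    have := congrFun (congrFun h 0) 1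
    simp [Jm] at this
  have hrow : ∀ f g : Fin n → ℝ, (row2 f g = 0 ↔ ∀ j, f j = 0 ∧ g j = 0) := by
    intro f g
    constructor
    · intro h j
      exact ⟨congrFun (congrFun h 0) j, congrFun (congrFun h 1) j⟩
    · intro h
      ext a j
      fin_cases a <;> simp [row2, (h j).1, (h j).2]
  -- equivalence for block A
  have hAiff : ((deriv (fun y => hpar t y) x
        + ∑ j, (h1 t x j * v2 t x j - h2 t x j * v1 t x j)) • Jm = 0)
      ↔ (2 * Complex.I * ((deriv (fun y => hpar t y) x : ℝ) : ℂ)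
          - dotv (hc t x) (cvec (vc t x)) + dotv (vc t x) (cvec (hc t x)) = 0) := by
    rw [smul_eq_zero, or_iff_left hJm, hvv, hhh, auxA]
  -- equivalence for block D
  have hDiff : ((Matrix.of fun j k => deriv (fun y => hb t y j k) x
             + (h1 t x j * v1 t x k + h2 t x j * v2 t x k)
             - (v1 t x j * h1 t x k + v2 t x j * h2 t x k))
        = (0 : Matrix (Fin n) (Fin n) ℝ))
      ↔ ((2 : ℂ) • ((dxMR hb t x).map fun r => (r : ℂ))
          + outer (cvec (hc t x)) (vc t x) + outer (hc t x) (cvec (vc t x))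
          - outer (cvec (vc t x)) (hc t x) - outer (vc t x) (cvec (hc t x)) = 0) := by
    rw [← Matrix.ext_iff, ← Matrix.ext_iff]
    refine forall_congr' fun j => forall_congr' fun k => ?_
    simp only [Matrix.of_apply, Matrix.zero_apply, Matrix.sub_apply, Matrix.add_apply,
      Matrix.smul_apply, Matrix.map_apply, dxMR, outer, cvec, hvv, hhh, smul_eq_mul]
    rw [auxB]
  -- equivalence for block B
  have hcontr : ∀ j, contr (vc t x) ((hb t x).map fun r => (r : ℂ)) j
      = ((∑ k, v1 t x k * hb t x k j : ℝ) : ℂ)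
        + Complex.I * ((∑ k, v2 t x k * hb t x k j : ℝ) : ℂ) := by
    intro j
    simp only [contr, Matrix.map_apply, hvv]
    push_cast
    rw [Finset.mul_sum, ← Finset.sum_add_distrib]
    exact Finset.sum_congr rfl fun k _ => by ring
  have hdxV : ∀ j, dxV hc t x j
      = ((deriv (fun y => h1 t y j) x : ℝ) : ℂ)
        + Complex.I * ((deriv (fun y => h2 t y j) x : ℝ) : ℂ) := by
    intro j
    have : (fun y => hc t y j) = fun y => ((h1 t y j : ℝ) : ℂ) + Complex.I * ((h2 t y j : ℝ) : ℂ) :=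
      funext fun y => hhc t y j
    have d1 : DifferentiableAt ℝ (fun y => h1 t y j) x :=
      diff_slice (f := fun a b => h1 a b j) (hh1 j) t x
    have d2 : DifferentiableAt ℝ (fun y => h2 t y j) x :=
      diff_slice (f := fun a b => h2 a b j) (hh2 j) t x
    rw [dxV, this]
    exact deriv_ofReal_add_I d1 d2
  have hBiff : (row2 (fun j => deriv (fun y => h1 t y j) x + ∑ k, v1 t x k * hb t x k j - hpar t x * v2 t x j + w2 t x j)
                (fun j => deriv (fun y => h2 t y j) x + ∑ k, v2 t x k * hb t x k j + hpar t x * v1 t x j - w1 t x j) = 0)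
      ↔ (∀ j, Complex.I * ϖc t x j - dxV hc t x j
          - Complex.I * (hpar t x : ℂ) * vc t x j
          - contr (vc t x) ((hb t x).map fun r => (r : ℂ)) j = 0) := by
    rw [hrow]
    refine forall_congr' fun j => ?_
    rw [hcontr j, hdxV j]
    simp only [hww, hvv]
    rw [auxC]
  rw [hAiff, hDiff, neg_eq_zero, Matrix.transpose_eq_zero, hBiff]
  tauto
end
end

section
/- Let N ≥ 2 and adopt the block parameterizations of e_x, ω_x, e_t, ω_t in so(N+1) by smooth functions v₁, v₂, ϖ₁, ϖ₂, h₁, h₂ : ℝ² → ℝ^{N−1}, h∥, θ : ℝ² → ℝ, 𝐡⊥, Θ : ℝ² → so(N−1), with complex combinations v := v₁ + i·v₂, h⊥ := h₁ + i·h₂, ϖ := ϖ₁ + i·ϖ₂. Then the constant-curvature Cartan structure equation ∂_x ω_t − ∂_t ω_x + [ω_x, ω_t] = −[e_x, e_t] holds at every point of ℝ² if and only if the following three equations hold at every point: (i) ∂_t v − ∂_x ϖ − v⌟Θ − i·θ·v = −i·h⊥; (ii) 2·∂_x Θ + ϖ̄⊗v + ϖ⊗v̄ − v̄⊗ϖ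 − v⊗ϖ̄ = 0; (iii) 2i·∂_x θ + v·ϖ̄ − ϖ·v̄ = 0. -/
open Matrix

noncomputable section

private lemma dAt_t {f : ℝ → ℝ → ℝ} (hf : ContDiff ℝ (⊤ : ℕ∞) fun q : ℝ × ℝ => f q.1 q.2)
    (x t : ℝ) : DifferentiableAt ℝ (fun s => f s x) t := by
  exact ((hf.differentiable (by simp)).comp
    ((differentiable_id.prodMk (differentiable_const x)))).differentiableAt

private lemma dAt_x {f : ℝ → ℝ → ℝ} (hf : ContDiff ℝ (⊤ : ℕ∞) fun q : ℝ × ℝ => f q.1 q.2)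
    (t y : ℝ) : DifferentiableAt ℝ (fun x => f t x) y := by
  exact ((hf.differentiable (by simp)).comp
    (((differentiable_const t).prodMk differentiable_id))).differentiableAt

private lemma deriv_reim {f g : ℝ → ℝ} {t : ℝ} (hf : DifferentiableAt ℝ f t)
    (hg : DifferentiableAt ℝ g t) :
    deriv (fun s => (f s : ℂ) + Complex.I * (g s : ℂ)) t
      = ((deriv f t : ℝ) : ℂ) + Complex.I * ((deriv g t : ℝ) : ℂ) := by
  have h1 : HasDerivAt (fun s => (f s : ℂ)) (((deriv f t : ℝ) : ℂ)) t :=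
    hf.hasDerivAt.ofReal_comp
  have h2 : HasDerivAt (fun s => Complex.I * (g s : ℂ))
      (Complex.I * ((deriv g t : ℝ) : ℂ)) t :=
    hg.hasDerivAt.ofReal_comp.const_mul Complex.I
  exact (h1.add h2).deriv

private lemma creim_zero (a b : ℝ) :
    ((a : ℂ) + Complex.I * b = 0) ↔ (a = 0 ∧ b = 0) := by
  constructor
  · intro h
    constructor
    · simpa using congrArg Complex.re h
    · simpa using congrArg Complex.im h
  · rintro ⟨rfl, rfl⟩; simp

private lemma creim_eq (a b c d : ℝ) :
    ((a : ℂ) + Complex.I * b = (c : ℂ) + Complex.I * d) ↔ (a = c ∧ b = d) := by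
  constructor
  · intro h
    constructor
    · simpa using congrArg Complex.re h
    · simpa using congrArg Complex.im h
  · rintro ⟨rfl, rfl⟩; rfl

private lemma csum_split {n : ℕ} (f g : Fin n → ℝ) :
    (∑ k, (((f k : ℝ) : ℂ) + Complex.I * (g k : ℂ)))
      = ((∑ k, f k : ℝ) : ℂ) + Complex.I * ((∑ k, g k : ℝ) : ℂ) := by
  push_cast
  rw [Finset.sum_add_distrib, Finset.mul_sum]


/-- for the SO(N+1)-parallel frame data, the constant-curvature
Cartan structure equation ∂_x ω_t − ∂_t ω_x + [ω_x,ω_t] = −[e_x,e_t] is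
equivalent to the three complex component equations (i), (ii), (iii). -/
theorem statement12 (n : ℕ) (hn : 1 ≤ n)
    (v1 v2 w1 w2 h1 h2 : ℝ → ℝ → Fin n → ℝ) (hpar θf : ℝ → ℝ → ℝ)
    (hb Θ : ℝ → ℝ → Matrix (Fin n) (Fin n) ℝ)
    (hv1 : ∀ j, ContDiff ℝ (⊤ : ℕ∞) fun q : ℝ × ℝ => v1 q.1 q.2 j)
    (hv2 : ∀ j, ContDiff ℝ (⊤ : ℕ∞) fun q : ℝ × ℝ => v2 q.1 q.2 j)
    (hw1 : ∀ j, ContDiff ℝ (⊤ : ℕ∞) fun q : ℝ × ℝ => w1 q.1 q.2 j)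
    (hw2 : ∀ j, ContDiff ℝ (⊤ : ℕ∞) fun q : ℝ × ℝ => w2 q.1 q.2 j)
    (hh1 : ∀ j, ContDiff ℝ (⊤ : ℕ∞) fun q : ℝ × ℝ => h1 q.1 q.2 j)
    (hh2 : ∀ j, ContDiff ℝ (⊤ : ℕ∞) fun q : ℝ × ℝ => h2 q.1 q.2 j)
    (hhpar : ContDiff ℝ (⊤ : ℕ∞) fun q : ℝ × ℝ => hpar q.1 q.2)
    (hθf : ContDiff ℝ (⊤ : ℕ∞) fun q : ℝ × ℝ => θf q.1 q.2)
    (hhb : ∀ j k, ContDiff ℝ (⊤ : ℕ∞) fun q : ℝ × ℝ => hb q.1 q.2 j k)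
    (hΘs : ∀ j k, ContDiff ℝ (⊤ : ℕ∞) fun q : ℝ × ℝ => Θ q.1 q.2 j k)
    (hbso : ∀ t x, (hb t x)ᵀ = -(hb t x))
    (hΘso : ∀ t x, (Θ t x)ᵀ = -(Θ t x))
    (ex : Matrix (Jdx n) (Jdx n) ℝ) (hex : ex = Em n)
    (ωx et ωt : ℝ → ℝ → Matrix (Jdx n) (Jdx n) ℝ)
    (hωx : ∀ t x, ωx t x = Matrix.fromBlocks 0 (row2 (v1 t x) (v2 t x))
        (-(row2 (v1 t x) (v2 t x))ᵀ) 0)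
    (het : ∀ t x, et t x = Matrix.fromBlocks (hpar t x • Jm)
        (row2 (h1 t x) (h2 t x)) (-(row2 (h1 t x) (h2 t x))ᵀ) (hb t x))
    (hωt : ∀ t x, ωt t x = Matrix.fromBlocks (θf t x • Jm)
        (row2 (w1 t x) (w2 t x)) (-(row2 (w1 t x) (w2 t x))ᵀ) (Θ t x))
    (vc hc ϖc : ℝ → ℝ → Fin n → ℂ)
    (hvc : ∀ t x j, vc t x j = (v1 t x j : ℂ) + Complex.I * (v2 t x j : ℂ))
    (hhc : ∀ t x j, hc t x j = (h1 t x j : ℂ) + Complex.I * (h2 t x j : ℂ))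
    (hϖc : ∀ t x j, ϖc t x j = (w1 t x j : ℂ) + Complex.I * (w2 t x j : ℂ)) :
    (∀ t x, dxMR ωt t x - dtMR ωx t x
        + (ωx t x * ωt t x - ωt t x * ωx t x)
        = -(ex * et t x - et t x * ex))
    ↔ (∀ t x,
        (∀ j, dtV vc t x j - dxV ϖc t x j
          - contr (vc t x) ((Θ t x).map fun r => (r : ℂ)) j
          - Complex.I * (θf t x : ℂ) * vc t x j
          = -Complex.I * hc t x j) ∧
        ((2 : ℂ) • ((dxMR Θ t x).map fun r => (r : ℂ))
          + outer (cvec (ϖc t x)) (vc t x) + outer (ϖc t x) (cvec (vc t x))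
          - outer (cvec (vc t x)) (ϖc t x) - outer (vc t x) (cvec (ϖc t x)) = 0) ∧
        (2 * Complex.I * ((deriv (fun y => θf t y) x : ℝ) : ℂ)
          + dotv (vc t x) (cvec (ϖc t x)) - dotv (ϖc t x) (cvec (vc t x)) = 0)) := by
  have dv1t : ∀ (x t : ℝ) j, DifferentiableAt ℝ (fun s => v1 s x j) t := fun x t j => dAt_t (f := fun s x => v1 s x j) (hv1 j) x t
  have dv2t : ∀ (x t : ℝ) j, DifferentiableAt ℝ (fun s => v2 s x j) t := fun x t j => dAt_t (f := fun s x => v2 s x j) (hv2 j) x t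
  have dw1x : ∀ (t y : ℝ) j, DifferentiableAt ℝ (fun x => w1 t x j) y := fun t y j => dAt_x (f := fun s x => w1 s x j) (hw1 j) t y
  have dw2x : ∀ (t y : ℝ) j, DifferentiableAt ℝ (fun x => w2 t x j) y := fun t y j => dAt_x (f := fun s x => w2 s x j) (hw2 j) t y
  have Dv : ∀ t x j, dtV vc t x j
      = ((deriv (fun s => v1 s x j) t : ℝ) : ℂ) + Complex.I * ((deriv (fun s => v2 s x j) t : ℝ) : ℂ) := by
    intro t x j
    simp only [dtV, hvc]
    exact deriv_reim (dv1t x t j) (dv2t x t j)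
  have Dw : ∀ t x j, dxV ϖc t x j
      = ((deriv (fun y => w1 t y j) x : ℝ) : ℂ) + Complex.I * ((deriv (fun y => w2 t y j) x : ℝ) : ℂ) := by
    intro t x j
    simp only [dxV, hϖc]
    exact deriv_reim (dw1x t x j) (dw2x t x j)
  have Dc : ∀ t x j, contr (vc t x) ((Θ t x).map fun r => (r : ℂ)) j
      = ((∑ k, v1 t x k * Θ t x k j : ℝ) : ℂ)
        + Complex.I * ((∑ k, v2 t x k * Θ t x k j : ℝ) : ℂ) := by
    intro t x j
    have h : ∀ k : Fin n, vc t x k * ((Θ t x).map fun r => (r : ℂ)) k j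
        = ((v1 t x k * Θ t x k j : ℝ) : ℂ) + Complex.I * ((v2 t x k * Θ t x k j : ℝ) : ℂ) := by
      intro k
      simp only [hvc, Matrix.map_apply]
      push_cast
      ring
    simp only [contr]
    rw [Finset.sum_congr rfl (fun k _ => h k), csum_split]
  have Ddot1 : ∀ t x, dotv (vc t x) (cvec (ϖc t x))
      = ((∑ k, (v1 t x k * w1 t x k + v2 t x k * w2 t x k) : ℝ) : ℂ)
        + Complex.I * ((∑ k, (v2 t x k * w1 t x k - v1 t x k * w2 t x k) : ℝ) : ℂ) := by
    intro t x
    have h : ∀ k : Fin n, vc t x k * cvec (ϖc t x) k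
        = (((v1 t x k * w1 t x k + v2 t x k * w2 t x k) : ℝ) : ℂ)
          + Complex.I * (((v2 t x k * w1 t x k - v1 t x k * w2 t x k) : ℝ) : ℂ) := by
      intro k
      simp only [hvc, hϖc, cvec, map_add, _root_.map_mul, Complex.conj_ofReal, Complex.conj_I]
      push_cast
      apply Complex.ext <;> simp <;> ring
    simp only [dotv]
    rw [Finset.sum_congr rfl (fun k _ => h k), csum_split]
  have Ddot2 : ∀ t x, dotv (ϖc t x) (cvec (vc t x))
      = ((∑ k, (v1 t x k * w1 t x k + v2 t x k * w2 t x k) : ℝ) : ℂ)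
        + Complex.I * ((∑ k, (v1 t x k * w2 t x k - v2 t x k * w1 t x k) : ℝ) : ℂ) := by
    intro t x
    have h : ∀ k : Fin n, ϖc t x k * cvec (vc t x) k
        = (((v1 t x k * w1 t x k + v2 t x k * w2 t x k) : ℝ) : ℂ)
          + Complex.I * (((v1 t x k * w2 t x k - v2 t x k * w1 t x k) : ℝ) : ℂ) := by
      intro k
      simp only [hvc, hϖc, cvec, map_add, _root_.map_mul, Complex.conj_ofReal, Complex.conj_I]
      push_cast
      apply Complex.ext <;> simp <;> ring
    simp only [dotv]
    rw [Finset.sum_congr rfl (fun k _ => h k), csum_split]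
  have Ei : ∀ t x j,
      (dtV vc t x j - dxV ϖc t x j - contr (vc t x) ((Θ t x).map fun r => (r : ℂ)) j
        - Complex.I * (θf t x : ℂ) * vc t x j = -Complex.I * hc t x j)
      ↔ ((deriv (fun s => v1 s x j) t - deriv (fun y => w1 t y j) x
            - (∑ k, v1 t x k * Θ t x k j) + θf t x * v2 t x j = h2 t x j)
        ∧ (deriv (fun s => v2 s x j) t - deriv (fun y => w2 t y j) x
            - (∑ k, v2 t x k * Θ t x k j) - θf t x * v1 t x j = -h1 t x j)) := by
    intro t x j
    have eL : dtV vc t x j - dxV ϖc t x j - contr (vc t x) ((Θ t x).map fun r => (r : ℂ)) j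
        - Complex.I * (θf t x : ℂ) * vc t x j
        = (((deriv (fun s => v1 s x j) t - deriv (fun y => w1 t y j) x
            - (∑ k, v1 t x k * Θ t x k j) + θf t x * v2 t x j : ℝ)) : ℂ)
          + Complex.I * (((deriv (fun s => v2 s x j) t - deriv (fun y => w2 t y j) x
            - (∑ k, v2 t x k * Θ t x k j) - θf t x * v1 t x j : ℝ)) : ℂ) := by
      rw [Dv t x j, Dw t x j, Dc t x j, hvc]
      push_cast
      apply Complex.ext <;> simp <;> ring
    have eR : -Complex.I * hc t x j
        = ((h2 t x j : ℝ) : ℂ) + Complex.I * ((-h1 t x j : ℝ) : ℂ) := by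
      rw [hhc]
      push_cast
      apply Complex.ext <;> simp <;> ring
    rw [eL, eR, creim_eq]
  have Eiii : ∀ t x,
      (2 * Complex.I * ((deriv (fun y => θf t y) x : ℝ) : ℂ)
        + dotv (vc t x) (cvec (ϖc t x)) - dotv (ϖc t x) (cvec (vc t x)) = 0)
      ↔ (deriv (fun y => θf t y) x
          + (∑ k, (v2 t x k * w1 t x k - v1 t x k * w2 t x k)) = 0) := by
    intro t x
    have eL : 2 * Complex.I * ((deriv (fun y => θf t y) x : ℝ) : ℂ)
        + dotv (vc t x) (cvec (ϖc t x)) - dotv (ϖc t x) (cvec (vc t x))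
        = ((0 : ℝ) : ℂ) + Complex.I
            * ((2 * (deriv (fun y => θf t y) x
                + (∑ k, (v2 t x k * w1 t x k - v1 t x k * w2 t x k))) : ℝ) : ℂ) := by
      rw [Ddot1 t x, Ddot2 t x]
      have hs : (∑ k, (v1 t x k * w2 t x k - v2 t x k * w1 t x k))
          = -(∑ k, (v2 t x k * w1 t x k - v1 t x k * w2 t x k)) := by
        rw [← Finset.sum_neg_distrib]
        exact Finset.sum_congr rfl fun k _ => by ring
      rw [hs]
      push_cast
      apply Complex.ext <;> simp <;> ring
    rw [eL, creim_zero]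
    constructor
    · intro h
      linarith [h.2]
    · intro h
      constructor
      · rfl
      · linarith
  have Eii : ∀ t x, ((2 : ℂ) • ((dxMR Θ t x).map fun r => (r : ℂ))
        + outer (cvec (ϖc t x)) (vc t x) + outer (ϖc t x) (cvec (vc t x))
        - outer (cvec (vc t x)) (ϖc t x) - outer (vc t x) (cvec (ϖc t x)) = 0)
      ↔ (∀ j k, deriv (fun y => Θ t y j k) x
          - (v1 t x j * w1 t x k + v2 t x j * w2 t x k)
          + (w1 t x j * v1 t x k + w2 t x j * v2 t x k) = 0) := by
    intro t x
    rw [← Matrix.ext_iff]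
    refine forall_congr' fun j => forall_congr' fun k => ?_
    have e : ((2 : ℂ) • ((dxMR Θ t x).map fun r => (r : ℂ))
        + outer (cvec (ϖc t x)) (vc t x) + outer (ϖc t x) (cvec (vc t x))
        - outer (cvec (vc t x)) (ϖc t x) - outer (vc t x) (cvec (ϖc t x))) j k
        = ((2 * (deriv (fun y => Θ t y j k) x
            - (v1 t x j * w1 t x k + v2 t x j * w2 t x k)
            + (w1 t x j * v1 t x k + w2 t x j * v2 t x k)) : ℝ) : ℂ)
          + Complex.I * ((0 : ℝ) : ℂ) := by
      simp only [Matrix.add_apply, Matrix.sub_apply, Matrix.smul_apply, Matrix.map_apply,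
        outer, Matrix.of_apply, cvec, dxMR, hvc, hϖc, map_add, _root_.map_mul,
        Complex.conj_ofReal, Complex.conj_I, smul_eq_mul]
      push_cast
      apply Complex.ext <;> simp <;> ring
    rw [e, Matrix.zero_apply, creim_zero]
    constructor
    · intro h
      linarith [h.1]
    · intro h
      exact ⟨by linarith, rfl⟩
  have hsumc : ∀ (f g : Fin n → ℝ), ∑ k, f k * g k = ∑ k, g k * f k :=
    fun f g => Finset.sum_congr rfl fun k _ => mul_comm _ _
  constructor
  · intro H t x
    have HM : ∀ i j, (dxMR ωt t x - dtMR ωx t x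
        + (ωx t x * ωt t x - ωt t x * ωx t x)) i j
        = (-(ex * et t x - et t x * ex)) i j :=
      fun i j => congrFun (congrFun (H t x) i) j
    have h01 := HM (Sum.inl 0) (Sum.inl 1)
    have hA0 := fun j => HM (Sum.inl 0) (Sum.inr j)
    have hA1 := fun j => HM (Sum.inl 1) (Sum.inr j)
    have hB := fun j k => HM (Sum.inr j) (Sum.inr k)
    simp only [dxMR, dtMR, hωt, hωx, het, hex, Em, Matrix.sub_apply, Matrix.add_apply,
      Matrix.neg_apply, Matrix.mul_apply, Matrix.of_apply, Fintype.sum_sum_type,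
      Matrix.fromBlocks_apply₁₁, Matrix.fromBlocks_apply₁₂, Matrix.fromBlocks_apply₂₁,
      Matrix.fromBlocks_apply₂₂, Matrix.smul_apply, smul_eq_mul, Matrix.transpose_apply,
      Matrix.zero_apply, row2, Jm, Fin.sum_univ_two, Matrix.cons_val', Matrix.cons_val_zero,
      Matrix.cons_val_one, Matrix.head_cons, Matrix.head_fin_const, Matrix.empty_val',
      Matrix.cons_val_fin_one, mul_zero, zero_mul, add_zero, zero_add,
      mul_one, one_mul, mul_neg, neg_mul, deriv_const, neg_zero, neg_neg, sub_zero,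
      zero_sub, sub_self, deriv.neg, Finset.sum_const_zero] at h01 hA0 hA1 hB
    refine ⟨fun j => (Ei t x j).2 ⟨by linarith [hA0 j], by linarith [hA1 j]⟩,
      (Eii t x).2 fun j k => by linarith [hB j k], (Eiii t x).2 ?_⟩
    have comb : (∑ k, (v2 t x k * w1 t x k - v1 t x k * w2 t x k))
        = (∑ k, -(v1 t x k * w2 t x k)) - ∑ k, -(w1 t x k * v2 t x k) := by
      rw [Finset.sum_sub_distrib, Finset.sum_neg_distrib, Finset.sum_neg_distrib,
        hsumc (v2 t x) (w1 t x)]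
      ring
    linarith [h01, comb]
  · intro H t x
    obtain ⟨Hi, Hii, Hiii⟩ := H t x
    have R1 := fun j => ((Ei t x j).1 (Hi j)).1
    have R2 := fun j => ((Ei t x j).1 (Hi j)).2
    have R3 := fun j k => (Eii t x).1 Hii j k
    have R4 := (Eiii t x).1 Hiii
    have skw : ∀ j k, Θ t x j k = -Θ t x k j := by
      intro j k
      have := congrFun (congrFun (hΘso t x) k) j
      simpa [Matrix.transpose_apply, Matrix.neg_apply] using this
    have hsum1 : ∀ j, ∑ k, Θ t x j k * v1 t x k = -∑ k, v1 t x k * Θ t x k j := by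
      intro j
      rw [← Finset.sum_neg_distrib]
      exact Finset.sum_congr rfl fun k _ => by rw [skw j k]; ring
    have hsum2 : ∀ j, ∑ k, Θ t x j k * v2 t x k = -∑ k, v2 t x k * Θ t x k j := by
      intro j
      rw [← Finset.sum_neg_distrib]
      exact Finset.sum_congr rfl fun k _ => by rw [skw j k]; ring
    have comb : (∑ k, (v2 t x k * w1 t x k - v1 t x k * w2 t x k))
        = (∑ k, -(v1 t x k * w2 t x k)) - ∑ k, -(w1 t x k * v2 t x k) := by
      rw [Finset.sum_sub_distrib, Finset.sum_neg_distrib, Finset.sum_neg_distrib,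
        hsumc (v2 t x) (w1 t x)]
      ring
    have hsumn : ∀ (f g : Fin n → ℝ), ∑ k, f k * g k = ∑ k, g k * f k := hsumc
    have comb2 : (∑ k, (v2 t x k * w1 t x k - v1 t x k * w2 t x k))
        = (∑ k, w1 t x k * v2 t x k) - ∑ k, v1 t x k * w2 t x k := by
      rw [Finset.sum_sub_distrib, hsumc (v2 t x) (w1 t x)]
    have ηθ : deriv (θf t) x = deriv (fun y => θf t y) x := rfl
    ext i j
    rcases i with a | j0 <;> rcases j with b | k0
    · fin_cases a <;> fin_cases b
      · simp only [dxMR, dtMR, hωt, hωx, het, hex, Em, Matrix.sub_apply, Matrix.add_apply,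
          Matrix.neg_apply, Matrix.mul_apply, Matrix.of_apply, Fintype.sum_sum_type,
          Matrix.fromBlocks_apply₁₁, Matrix.fromBlocks_apply₁₂, Matrix.fromBlocks_apply₂₁,
          Matrix.fromBlocks_apply₂₂, Matrix.smul_apply, smul_eq_mul, Matrix.transpose_apply,
          Matrix.zero_apply, row2, Jm, Fin.sum_univ_two, Matrix.cons_val', Matrix.cons_val_zero,
          Matrix.cons_val_one, Matrix.head_cons, Matrix.head_fin_const, Matrix.empty_val',
          Matrix.cons_val_fin_one, mul_zero, zero_mul, add_zero, zero_add,
          mul_one, one_mul, mul_neg, neg_mul, deriv_const, neg_zero, neg_neg, sub_zero,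
          zero_sub, sub_self, deriv.neg, Finset.sum_const_zero, Fin.mk_zero, Fin.mk_one,
          Fin.isValue, Finset.sum_neg_distrib]
        linarith [hsumc (v1 t x) (w1 t x)]
      · simp only [dxMR, dtMR, hωt, hωx, het, hex, Em, Matrix.sub_apply, Matrix.add_apply,
          Matrix.neg_apply, Matrix.mul_apply, Matrix.of_apply, Fintype.sum_sum_type,
          Matrix.fromBlocks_apply₁₁, Matrix.fromBlocks_apply₁₂, Matrix.fromBlocks_apply₂₁,
          Matrix.fromBlocks_apply₂₂, Matrix.smul_apply, smul_eq_mul, Matrix.transpose_apply,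
          Matrix.zero_apply, row2, Jm, Fin.sum_univ_two, Matrix.cons_val', Matrix.cons_val_zero,
          Matrix.cons_val_one, Matrix.head_cons, Matrix.head_fin_const, Matrix.empty_val',
          Matrix.cons_val_fin_one, mul_zero, zero_mul, add_zero, zero_add,
          mul_one, one_mul, mul_neg, neg_mul, deriv_const, neg_zero, neg_neg, sub_zero,
          zero_sub, sub_self, deriv.neg, Finset.sum_const_zero, Fin.mk_zero, Fin.mk_one,
          Fin.isValue, Finset.sum_neg_distrib]
        linarith [R4, comb2]
      · simp only [dxMR, dtMR, hωt, hωx, het, hex, Em, Matrix.sub_apply, Matrix.add_apply,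
          Matrix.neg_apply, Matrix.mul_apply, Matrix.of_apply, Fintype.sum_sum_type,
          Matrix.fromBlocks_apply₁₁, Matrix.fromBlocks_apply₁₂, Matrix.fromBlocks_apply₂₁,
          Matrix.fromBlocks_apply₂₂, Matrix.smul_apply, smul_eq_mul, Matrix.transpose_apply,
          Matrix.zero_apply, row2, Jm, Fin.sum_univ_two, Matrix.cons_val', Matrix.cons_val_zero,
          Matrix.cons_val_one, Matrix.head_cons, Matrix.head_fin_const, Matrix.empty_val',
          Matrix.cons_val_fin_one, mul_zero, zero_mul, add_zero, zero_add,
          mul_one, one_mul, mul_neg, neg_mul, deriv_const, neg_zero, neg_neg, sub_zero,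
          zero_sub, sub_self, deriv.neg, Finset.sum_const_zero, Fin.mk_zero, Fin.mk_one,
          Fin.isValue, Finset.sum_neg_distrib, deriv.fun_neg]
        linarith [R4, comb2, ηθ, hsumc (w2 t x) (v1 t x), hsumc (v2 t x) (w1 t x)]
      · simp only [dxMR, dtMR, hωt, hωx, het, hex, Em, Matrix.sub_apply, Matrix.add_apply,
          Matrix.neg_apply, Matrix.mul_apply, Matrix.of_apply, Fintype.sum_sum_type,
          Matrix.fromBlocks_apply₁₁, Matrix.fromBlocks_apply₁₂, Matrix.fromBlocks_apply₂₁,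
          Matrix.fromBlocks_apply₂₂, Matrix.smul_apply, smul_eq_mul, Matrix.transpose_apply,
          Matrix.zero_apply, row2, Jm, Fin.sum_univ_two, Matrix.cons_val', Matrix.cons_val_zero,
          Matrix.cons_val_one, Matrix.head_cons, Matrix.head_fin_const, Matrix.empty_val',
          Matrix.cons_val_fin_one, mul_zero, zero_mul, add_zero, zero_add,
          mul_one, one_mul, mul_neg, neg_mul, deriv_const, neg_zero, neg_neg, sub_zero,
          zero_sub, sub_self, deriv.neg, Finset.sum_const_zero, Fin.mk_zero, Fin.mk_one,
          Fin.isValue, Finset.sum_neg_distrib]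
        linarith [hsumc (v2 t x) (w2 t x)]
    · fin_cases a
      · simp only [dxMR, dtMR, hωt, hωx, het, hex, Em, Matrix.sub_apply, Matrix.add_apply,
          Matrix.neg_apply, Matrix.mul_apply, Matrix.of_apply, Fintype.sum_sum_type,
          Matrix.fromBlocks_apply₁₁, Matrix.fromBlocks_apply₁₂, Matrix.fromBlocks_apply₂₁,
          Matrix.fromBlocks_apply₂₂, Matrix.smul_apply, smul_eq_mul, Matrix.transpose_apply,
          Matrix.zero_apply, row2, Jm, Fin.sum_univ_two, Matrix.cons_val', Matrix.cons_val_zero,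
          Matrix.cons_val_one, Matrix.head_cons, Matrix.head_fin_const, Matrix.empty_val',
          Matrix.cons_val_fin_one, mul_zero, zero_mul, add_zero, zero_add,
          mul_one, one_mul, mul_neg, neg_mul, deriv_const, neg_zero, neg_neg, sub_zero,
          zero_sub, sub_self, deriv.neg, Finset.sum_const_zero, Fin.mk_zero, Fin.mk_one,
          Fin.isValue, Finset.sum_neg_distrib]
        linarith [R1 k0]
      · simp only [dxMR, dtMR, hωt, hωx, het, hex, Em, Matrix.sub_apply, Matrix.add_apply,
          Matrix.neg_apply, Matrix.mul_apply, Matrix.of_apply, Fintype.sum_sum_type,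
          Matrix.fromBlocks_apply₁₁, Matrix.fromBlocks_apply₁₂, Matrix.fromBlocks_apply₂₁,
          Matrix.fromBlocks_apply₂₂, Matrix.smul_apply, smul_eq_mul, Matrix.transpose_apply,
          Matrix.zero_apply, row2, Jm, Fin.sum_univ_two, Matrix.cons_val', Matrix.cons_val_zero,
          Matrix.cons_val_one, Matrix.head_cons, Matrix.head_fin_const, Matrix.empty_val',
          Matrix.cons_val_fin_one, mul_zero, zero_mul, add_zero, zero_add,
          mul_one, one_mul, mul_neg, neg_mul, deriv_const, neg_zero, neg_neg, sub_zero,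
          zero_sub, sub_self, deriv.neg, Finset.sum_const_zero, Fin.mk_zero, Fin.mk_one,
          Fin.isValue, Finset.sum_neg_distrib]
        linarith [R2 k0]
    · fin_cases b
      · simp only [dxMR, dtMR, hωt, hωx, het, hex, Em, Matrix.sub_apply, Matrix.add_apply,
          Matrix.neg_apply, Matrix.mul_apply, Matrix.of_apply, Fintype.sum_sum_type,
          Matrix.fromBlocks_apply₁₁, Matrix.fromBlocks_apply₁₂, Matrix.fromBlocks_apply₂₁,
          Matrix.fromBlocks_apply₂₂, Matrix.smul_apply, smul_eq_mul, Matrix.transpose_apply,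
          Matrix.zero_apply, row2, Jm, Fin.sum_univ_two, Matrix.cons_val', Matrix.cons_val_zero,
          Matrix.cons_val_one, Matrix.head_cons, Matrix.head_fin_const, Matrix.empty_val',
          Matrix.cons_val_fin_one, mul_zero, zero_mul, add_zero, zero_add,
          mul_one, one_mul, mul_neg, neg_mul, deriv_const, neg_zero, neg_neg, sub_zero,
          zero_sub, sub_self, deriv.neg, Finset.sum_const_zero, Fin.mk_zero, Fin.mk_one,
          Fin.isValue, Finset.sum_neg_distrib, deriv.fun_neg]
        linarith [R1 j0, hsum1 j0]
      · simp only [dxMR, dtMR, hωt, hωx, het, hex, Em, Matrix.sub_apply, Matrix.add_apply,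
          Matrix.neg_apply, Matrix.mul_apply, Matrix.of_apply, Fintype.sum_sum_type,
          Matrix.fromBlocks_apply₁₁, Matrix.fromBlocks_apply₁₂, Matrix.fromBlocks_apply₂₁,
          Matrix.fromBlocks_apply₂₂, Matrix.smul_apply, smul_eq_mul, Matrix.transpose_apply,
          Matrix.zero_apply, row2, Jm, Fin.sum_univ_two, Matrix.cons_val', Matrix.cons_val_zero,
          Matrix.cons_val_one, Matrix.head_cons, Matrix.head_fin_const, Matrix.empty_val',
          Matrix.cons_val_fin_one, mul_zero, zero_mul, add_zero, zero_add,
          mul_one, one_mul, mul_neg, neg_mul, deriv_const, neg_zero, neg_neg, sub_zero,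
          zero_sub, sub_self, deriv.neg, Finset.sum_const_zero, Fin.mk_zero, Fin.mk_one,
          Fin.isValue, Finset.sum_neg_distrib, deriv.fun_neg]
        linarith [R2 j0, hsum2 j0]
    · simp only [dxMR, dtMR, hωt, hωx, het, hex, Em, Matrix.sub_apply, Matrix.add_apply,
          Matrix.neg_apply, Matrix.mul_apply, Matrix.of_apply, Fintype.sum_sum_type,
          Matrix.fromBlocks_apply₁₁, Matrix.fromBlocks_apply₁₂, Matrix.fromBlocks_apply₂₁,
          Matrix.fromBlocks_apply₂₂, Matrix.smul_apply, smul_eq_mul, Matrix.transpose_apply,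
          Matrix.zero_apply, row2, Jm, Fin.sum_univ_two, Matrix.cons_val', Matrix.cons_val_zero,
          Matrix.cons_val_one, Matrix.head_cons, Matrix.head_fin_const, Matrix.empty_val',
          Matrix.cons_val_fin_one, mul_zero, zero_mul, add_zero, zero_add,
          mul_one, one_mul, mul_neg, neg_mul, deriv_const, neg_zero, neg_neg, sub_zero,
          zero_sub, sub_self, deriv.neg, Finset.sum_const_zero, Fin.mk_zero, Fin.mk_one,
          Fin.isValue, Finset.sum_neg_distrib]
      linarith [R3 j0 k0]
end
end

section
/- (+1 flow in SU(N) is the vector NLS equation; part of Theorem 3.) Let N ≥ 2 and κ := √(2N/(N−1)). Let v : ℝ² → ℂ^{N−1} be a smooth row-vector-valued function of (t,x) and define the su(N)-valued maps e_x := (iκ/N)·diag(1−N,1,…,1) (constant), ω_x := [[0, v],[−v†, 0]], e_t := κ·[[0, v],[−v†, 0]], ω_t := [[i|v|², −i·∂_x v],[−(−i·∂_x v)†, −i·v̄⊗v]]. Then the pair of Cartan structure equations — zero torsion ∂_x e_t − ∂_t e_x + [ω_x, e_t] − [ω_t, e_x] = 0 and constant curvature ∂_x ω_t − ∂_t ω_x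 + [ω_x, ω_t] = −[e_x, e_t] — holds at every point of ℝ² if and only if v satisfies the U(N−1)-invariant vector NLS equation i·∂_t v = ∂_x² v + 2|v|²·v + κ²·v. -/
open Matrix

set_option maxRecDepth 8000
set_option maxHeartbeats 2000000
noncomputable section

/-- for the +1 flow data in SU(N), the pair of Cartan structure
equations (zero torsion and constant curvature) holds if and only if v satisfies
the U(N−1)-invariant vector NLS equation i·∂_t v = ∂_x² v + 2|v|²·v + κ²·v. -/
theorem statement13 (n : ℕ) (hn : 1 ≤ n) (κ : ℝ)
    (hκ : κ = Real.sqrt (2 * ((n : ℝ) + 1) / n))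
    (v : ℝ → ℝ → Fin n → ℂ)
    (hv : ∀ j, ContDiff ℝ (⊤ : ℕ∞) fun q : ℝ × ℝ => v q.1 q.2 j)
    (ex : Matrix (Idx n) (Idx n) ℂ)
    (hex : ex = (Complex.I * (κ : ℂ) / ((n : ℂ) + 1)) • blk (1 - ((n : ℂ) + 1)) 0 0 1)
    (ωx et ωt : ℝ → ℝ → Matrix (Idx n) (Idx n) ℂ)
    (hωx : ∀ t x, ωx t x = blk 0 (v t x) (fun j => -(starRingEnd ℂ (v t x j))) 0)
    (het : ∀ t x, et t x =
      (κ : ℂ) • blk 0 (v t x) (fun j => -(starRingEnd ℂ (v t x j))) 0)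
    (hωt : ∀ t x, ωt t x = blk (Complex.I * dotv (v t x) (cvec (v t x)))
        (fun j => -Complex.I * dxV v t x j)
        (fun j => -(starRingEnd ℂ (-Complex.I * dxV v t x j)))
        ((-Complex.I) • outer (cvec (v t x)) (v t x))) :
    ((∀ t x, dxM et t x - dtM (fun _ _ => ex) t x
        + (ωx t x * et t x - et t x * ωx t x)
        - (ωt t x * ex - ex * ωt t x) = 0) ∧
     (∀ t x, dxM ωt t x - dtM ωx t x
        + (ωx t x * ωt t x - ωt t x * ωx t x)
        = -(ex * et t x - et t x * ex)))
    ↔ (∀ t x j, Complex.I * dtV v t x j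
        = deriv (fun y => dxV v t y j) x
          + 2 * dotv (v t x) (cvec (v t x)) * v t x j
          + (κ : ℂ) ^ 2 * v t x j) := by

  have hsx : ∀ t j, ContDiff ℝ (⊤ : ℕ∞) fun y : ℝ => v t y j := fun t j =>
    (hv j).comp (ContDiff.prodMk contDiff_const contDiff_id)
  have hst : ∀ x j, ContDiff ℝ (⊤ : ℕ∞) fun s : ℝ => v s x j := fun x j =>
    (hv j).comp (ContDiff.prodMk contDiff_id contDiff_const)
  have hx : ∀ t x j, HasDerivAt (fun y => v t y j) (dxV v t x j) x := fun t x j =>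
    (((hsx t j).differentiable (by simp)) x).hasDerivAt
  have ht : ∀ t x j, HasDerivAt (fun s => v s x j) (dtV v t x j) t := fun t x j =>
    (((hst x j).differentiable (by simp)) t).hasDerivAt
  have hdd : ∀ t j, Differentiable ℝ (fun y => dxV v t y j) := fun t j =>
    ((contDiff_infty_iff_deriv.mp ((hsx t j).of_le (by simp))).2).differentiable (by simp)
  have hxx : ∀ t x j, HasDerivAt (fun y => dxV v t y j)
      (deriv (fun y => dxV v t y j) x) x := fun t x j => (hdd t j x).hasDerivAt
  constructor
  · rintro ⟨-, hcurv⟩ t x j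
    have h := congrFun (congrFun (hcurv t x) (Sum.inl 0)) (Sum.inr j)
    simp only [hωx, hωt, het, hex, blk, dxM, dtM, Matrix.sub_apply, Matrix.add_apply,
      Matrix.neg_apply, Matrix.mul_apply, Matrix.of_apply, Matrix.smul_apply,
      Matrix.fromBlocks_apply₁₁, Matrix.fromBlocks_apply₁₂, Matrix.fromBlocks_apply₂₁,
      Matrix.fromBlocks_apply₂₂, Fintype.sum_sum_type, Fin.sum_univ_one, smul_eq_mul,
      Pi.zero_apply, Matrix.zero_apply, Matrix.one_apply, outer, cvec] at h
    rw [deriv_const_mul_field, (ht t x j).deriv] at h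
    have hne : ((n:ℂ)+1) ≠ 0 := Nat.cast_add_one_ne_zero n
    simp only [dotv, cvec, mul_zero, zero_mul, mul_one, mul_ite, Finset.sum_ite_eq',
      Finset.mem_univ, if_true, Finset.sum_const_zero, add_zero, zero_add, sub_zero] at h ⊢
    have hsum : (∑ m, v t x m * (-Complex.I * ((starRingEnd ℂ) (v t x m) * v t x j)))
        = (∑ m, v t x m * (starRingEnd ℂ) (v t x m)) * (-Complex.I * v t x j) := by
      rw [Finset.sum_mul]
      exact Finset.sum_congr rfl fun m _ => by ring
    rw [hsum] at h
    field_simp at h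
    ring_nf at h ⊢
    have h9 : (1 + (n:ℂ)*2 + (n:ℂ)^2) ≠ 0 := by
      have e : (1 + (n:ℂ)*2 + (n:ℂ)^2) = ((n:ℂ)+1)^2 := by ring
      rw [e]; exact pow_ne_zero _ hne
    have h2 : (Complex.I * dtV v t x j - (deriv (fun y => dxV v t y j) x
        + 2*(∑ m, v t x m * (starRingEnd ℂ) (v t x m)) * v t x j
        + (κ:ℂ)^2 * v t x j)) * ((n:ℂ)+1) = 0 := by
      linear_combination (-Complex.I) * h - ((n:ℂ)+1) * (deriv (fun y => dxV v t y j) x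
        + 2*(∑ m, v t x m * (starRingEnd ℂ) (v t x m)) * v t x j
        + (κ:ℂ)^2 * v t x j) * Complex.I_sq
    have h3 := sub_eq_zero.mp ((mul_eq_zero.mp h2).resolve_right hne)
    linear_combination h3
  · intro hnls
    have hxs : ∀ t x i, HasDerivAt (fun y => (starRingEnd ℂ) (v t y i)) ((starRingEnd ℂ) (dxV v t x i)) x :=
      fun t x i => by simpa only [starRingEnd_apply] using (hx t x i).star
    have hts : ∀ t x i, HasDerivAt (fun s => (starRingEnd ℂ) (v s x i)) ((starRingEnd ℂ) (dtV v t x i)) t :=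
      fun t x i => by simpa only [starRingEnd_apply] using (ht t x i).star
    have hxxs : ∀ t x i, HasDerivAt (fun y => (starRingEnd ℂ) (dxV v t y i))
        ((starRingEnd ℂ) (deriv (fun y => dxV v t y i) x)) x :=
      fun t x i => by simpa only [starRingEnd_apply] using (hxx t x i).star
    constructor
    · intro t x
      have hne : ((n:ℂ)+1) ≠ 0 := Nat.cast_add_one_ne_zero n
      ext i k
      cases i with
      | inl i =>
        cases k with
        | inl k =>
          simp only [hωx, hωt, het, hex, blk, dxM, dtM, Matrix.sub_apply, Matrix.add_apply,
            Matrix.neg_apply, Matrix.mul_apply, Matrix.of_apply, Matrix.smul_apply,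
            Matrix.fromBlocks_apply₁₁, Matrix.fromBlocks_apply₁₂, Matrix.fromBlocks_apply₂₁,
            Matrix.fromBlocks_apply₂₂, Fintype.sum_sum_type, Fin.sum_univ_one, smul_eq_mul,
            Pi.zero_apply, Matrix.zero_apply, Matrix.one_apply, outer, cvec, dotv,
            mul_zero, zero_mul, mul_one, deriv_const', Finset.sum_const_zero,
            add_zero, zero_add, sub_zero, zero_sub, neg_zero, mul_ite, ite_mul,
            Finset.sum_ite_eq, Finset.sum_ite_eq', Finset.mem_univ, if_true,
            _root_.map_mul, _root_.map_neg, Complex.conj_I, neg_neg]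
          rw [Finset.sum_congr rfl (fun m _ => by ring :
            ∀ m ∈ Finset.univ, v t x m * (↑κ * -(starRingEnd ℂ) (v t x m))
              = ↑κ * v t x m * -(starRingEnd ℂ) (v t x m))]
          ring
        | inr k =>
          simp only [hωx, hωt, het, hex, blk, dxM, dtM, Matrix.sub_apply, Matrix.add_apply,
            Matrix.neg_apply, Matrix.mul_apply, Matrix.of_apply, Matrix.smul_apply,
            Matrix.fromBlocks_apply₁₁, Matrix.fromBlocks_apply₁₂, Matrix.fromBlocks_apply₂₁,
            Matrix.fromBlocks_apply₂₂, Fintype.sum_sum_type, Fin.sum_univ_one, smul_eq_mul,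
            Pi.zero_apply, Matrix.zero_apply, Matrix.one_apply, outer, cvec, dotv,
            mul_zero, zero_mul, mul_one, deriv_const', Finset.sum_const_zero,
            add_zero, zero_add, sub_zero, zero_sub, neg_zero, mul_ite, ite_mul,
            Finset.sum_ite_eq, Finset.sum_ite_eq', Finset.mem_univ, if_true,
            _root_.map_mul, _root_.map_neg, Complex.conj_I, neg_neg]
          rw [deriv_const_mul_field, (hx t x k).deriv]
          field_simp
          linear_combination ((κ:ℂ) * dxV v t x k * ((n:ℂ)+1) + (κ:ℂ) * (n:ℂ) * dxV v t x k * ((n:ℂ)+1)) * Complex.I_sq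
              - ((κ:ℂ) * dxV v t x k * (n:ℂ) + (κ:ℂ) * dxV v t x k * (n:ℂ)^2) * Complex.I_sq
      | inr i =>
        cases k with
        | inl k =>
          simp only [hωx, hωt, het, hex, blk, dxM, dtM, Matrix.sub_apply, Matrix.add_apply,
            Matrix.neg_apply, Matrix.mul_apply, Matrix.of_apply, Matrix.smul_apply,
            Matrix.fromBlocks_apply₁₁, Matrix.fromBlocks_apply₁₂, Matrix.fromBlocks_apply₂₁,
            Matrix.fromBlocks_apply₂₂, Fintype.sum_sum_type, Fin.sum_univ_one, smul_eq_mul,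
            Pi.zero_apply, Matrix.zero_apply, Matrix.one_apply, outer, cvec, dotv,
            mul_zero, zero_mul, mul_one, deriv_const', Finset.sum_const_zero,
            add_zero, zero_add, sub_zero, zero_sub, neg_zero, mul_ite, ite_mul,
            Finset.sum_ite_eq, Finset.sum_ite_eq', Finset.mem_univ, if_true,
            _root_.map_mul, _root_.map_neg, Complex.conj_I, neg_neg]
          rw [HasDerivAt.deriv (f := fun y => ↑κ * -(starRingEnd ℂ) (v t y i)) ((hxs t x i).neg.const_mul ((κ:ℝ):ℂ))]
          field_simp
          linear_combination (-((κ:ℂ) * (starRingEnd ℂ) (dxV v t x i) * ((n:ℂ)+1))) * Complex.I_sq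
        | inr k =>
          simp only [hωx, hωt, het, hex, blk, dxM, dtM, Matrix.sub_apply, Matrix.add_apply,
            Matrix.neg_apply, Matrix.mul_apply, Matrix.of_apply, Matrix.smul_apply,
            Matrix.fromBlocks_apply₁₁, Matrix.fromBlocks_apply₁₂, Matrix.fromBlocks_apply₂₁,
            Matrix.fromBlocks_apply₂₂, Fintype.sum_sum_type, Fin.sum_univ_one, smul_eq_mul,
            Pi.zero_apply, Matrix.zero_apply, Matrix.one_apply, outer, cvec, dotv,
            mul_zero, zero_mul, mul_one, deriv_const', Finset.sum_const_zero,
            add_zero, zero_add, sub_zero, zero_sub, neg_zero, mul_ite, ite_mul,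
            Finset.sum_ite_eq, Finset.sum_ite_eq', Finset.mem_univ, if_true,
            _root_.map_mul, _root_.map_neg, Complex.conj_I, neg_neg]
          ring

    · intro t x
      have hne : ((n:ℂ)+1) ≠ 0 := Nat.cast_add_one_ne_zero n
      simp only [dotv, cvec] at hnls
      ext i k
      cases i with
      | inl i =>
        cases k with
        | inl k =>
          simp only [hωx, hωt, het, hex, blk, dxM, dtM, Matrix.sub_apply, Matrix.add_apply,
            Matrix.neg_apply, Matrix.mul_apply, Matrix.of_apply, Matrix.smul_apply,
            Matrix.fromBlocks_apply₁₁, Matrix.fromBlocks_apply₁₂, Matrix.fromBlocks_apply₂₁,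
            Matrix.fromBlocks_apply₂₂, Fintype.sum_sum_type, Fin.sum_univ_one, smul_eq_mul,
            Pi.zero_apply, Matrix.zero_apply, Matrix.one_apply, outer, cvec, dotv,
            mul_zero, zero_mul, mul_one, deriv_const', Finset.sum_const_zero,
            add_zero, zero_add, sub_zero, zero_sub, neg_zero, mul_ite, ite_mul,
            Finset.sum_ite_eq, Finset.sum_ite_eq', Finset.mem_univ, if_true,
            _root_.map_mul, _root_.map_neg, Complex.conj_I, neg_neg]
          have hS : HasDerivAt (fun y => ∑ m, v t y m * (starRingEnd ℂ) (v t y m))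
              (∑ m, (dxV v t x m * (starRingEnd ℂ) (v t x m)
                + v t x m * (starRingEnd ℂ) (dxV v t x m))) x :=
            HasDerivAt.fun_sum fun m _ => (hx t x m).mul (hxs t x m)
          rw [deriv_const_mul_field, hS.deriv, Finset.mul_sum, ← Finset.sum_sub_distrib,
            ← Finset.sum_add_distrib]
          exact Finset.sum_eq_zero fun m _ => by ring
        | inr k =>
          simp only [hωx, hωt, het, hex, blk, dxM, dtM, Matrix.sub_apply, Matrix.add_apply,
            Matrix.neg_apply, Matrix.mul_apply, Matrix.of_apply, Matrix.smul_apply,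
            Matrix.fromBlocks_apply₁₁, Matrix.fromBlocks_apply₁₂, Matrix.fromBlocks_apply₂₁,
            Matrix.fromBlocks_apply₂₂, Fintype.sum_sum_type, Fin.sum_univ_one, smul_eq_mul,
            Pi.zero_apply, Matrix.zero_apply, Matrix.one_apply, outer, cvec, dotv,
            mul_zero, zero_mul, mul_one, deriv_const', Finset.sum_const_zero,
            add_zero, zero_add, sub_zero, zero_sub, neg_zero, mul_ite, ite_mul,
            Finset.sum_ite_eq, Finset.sum_ite_eq', Finset.mem_univ, if_true,
            _root_.map_mul, _root_.map_neg, Complex.conj_I, neg_neg]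
          rw [deriv_const_mul_field, (ht t x k).deriv,
            Finset.sum_congr rfl (fun m _ => by ring :
              ∀ m ∈ Finset.univ, v t x m * (-Complex.I * ((starRingEnd ℂ) (v t x m) * v t x k))
                = v t x m * (starRingEnd ℂ) (v t x m) * (-Complex.I * v t x k)),
            ← Finset.sum_mul]
          field_simp
          linear_combination ((n:ℂ)+1)^2 * Complex.I * hnls t x k
            - dtV v t x k * ((n:ℂ)+1)^2 * Complex.I_sq
            - Complex.I * ((n:ℂ) + (n:ℂ)^2) * hnls t x k + dtV v t x k * ((n:ℂ) + (n:ℂ)^2) * Complex.I_sq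
      | inr i =>
        cases k with
        | inl k =>
          simp only [hωx, hωt, het, hex, blk, dxM, dtM, Matrix.sub_apply, Matrix.add_apply,
            Matrix.neg_apply, Matrix.mul_apply, Matrix.of_apply, Matrix.smul_apply,
            Matrix.fromBlocks_apply₁₁, Matrix.fromBlocks_apply₁₂, Matrix.fromBlocks_apply₂₁,
            Matrix.fromBlocks_apply₂₂, Fintype.sum_sum_type, Fin.sum_univ_one, smul_eq_mul,
            Pi.zero_apply, Matrix.zero_apply, Matrix.one_apply, outer, cvec, dotv,
            mul_zero, zero_mul, mul_one, deriv_const', Finset.sum_const_zero,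
            add_zero, zero_add, sub_zero, zero_sub, neg_zero, mul_ite, ite_mul,
            Finset.sum_ite_eq, Finset.sum_ite_eq', Finset.mem_univ, if_true,
            _root_.map_mul, _root_.map_neg, Complex.conj_I, neg_neg]
          rw [HasDerivAt.deriv (f := fun y => -(Complex.I * (starRingEnd ℂ) (dxV v t y i))) (((hxxs t x i).const_mul Complex.I).neg),
            HasDerivAt.deriv (f := fun s => -(starRingEnd ℂ) (v s x i)) (((hts t x i).neg)),
            Finset.sum_congr rfl (fun m _ => by ring :
              ∀ m ∈ Finset.univ, -Complex.I * ((starRingEnd ℂ) (v t x i) * v t x m) * -(starRingEnd ℂ) (v t x m)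
                = v t x m * (starRingEnd ℂ) (v t x m) * (Complex.I * (starRingEnd ℂ) (v t x i))),
            ← Finset.sum_mul]
          have hc := congrArg (starRingEnd ℂ) (hnls t x i)
          simp only [map_add, _root_.map_mul, map_pow, map_sum, Complex.conj_I,
            Complex.conj_conj, Complex.conj_ofReal, map_ofNat] at hc
          rw [Finset.sum_congr rfl
            (fun m _ => mul_comm ((starRingEnd ℂ) (v t x m)) (v t x m))] at hc
          field_simp
          linear_combination Complex.I * ((n:ℂ)+1)^2 * hc
            + (starRingEnd ℂ) (dtV v t x i) * ((n:ℂ)+1)^2 * Complex.I_sq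
            - Complex.I * ((n:ℂ) + (n:ℂ)^2) * hc - (starRingEnd ℂ) (dtV v t x i) * ((n:ℂ) + (n:ℂ)^2) * Complex.I_sq
        | inr k =>
          simp only [hωx, hωt, het, hex, blk, dxM, dtM, Matrix.sub_apply, Matrix.add_apply,
            Matrix.neg_apply, Matrix.mul_apply, Matrix.of_apply, Matrix.smul_apply,
            Matrix.fromBlocks_apply₁₁, Matrix.fromBlocks_apply₁₂, Matrix.fromBlocks_apply₂₁,
            Matrix.fromBlocks_apply₂₂, Fintype.sum_sum_type, Fin.sum_univ_one, smul_eq_mul,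
            Pi.zero_apply, Matrix.zero_apply, Matrix.one_apply, outer, cvec, dotv,
            mul_zero, zero_mul, mul_one, deriv_const', Finset.sum_const_zero,
            add_zero, zero_add, sub_zero, zero_sub, neg_zero, mul_ite, ite_mul,
            Finset.sum_ite_eq, Finset.sum_ite_eq', Finset.mem_univ, if_true,
            _root_.map_mul, _root_.map_neg, Complex.conj_I, neg_neg]
          rw [HasDerivAt.deriv (f := fun y => -Complex.I * ((starRingEnd ℂ) (v t y i) * v t y k)) (((hxs t x i).mul (hx t x k)).const_mul (-Complex.I))]
          ring
end
end

section
/- (+1 flow in SO(N+1) is the second vector NLS equation; part of Theorem 4.) Let N ≥ 2 and let v₁, v₂ : ℝ² → ℝ^{N−1} be smooth, with complex combination v := v₁ + i·v₂. Define the so(N+1)-valued maps e_x := [[J, 0],[0, 0]] (constant), ω_x := [[0, V],[−Vᵀ, 0]] with V the 2×(N−1) matrix with rows v₁, v₂; e_t := [[0, V],[−Vᵀ, 0]] (i.e. h∥ = 0, h⊥ = v, 𝐡⊥ = 0); and ω_t := [[θ·J, W],[−Wᵀ, Θ]] where θ := −(1/2)|v|², W is the 2×(N−1) matrix with rows ∂_x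 v₂ and −∂_x v₁ (so that the complex combination of its rows is −i·∂_x v), and Θ := Im(v̄⊗v) entrywise (a real skew-symmetric matrix). Then the pair of Cartan structure equations — zero torsion ∂_x e_t − ∂_t e_x + [ω_x, e_t] − [ω_t, e_x] = 0 and constant curvature ∂_x ω_t − ∂_t ω_x + [ω_x, ω_t] = −[e_x, e_t] — holds at every point of ℝ² if and only if v satisfies the U(N−1)-invariant vector NLS equation i·∂_t v = ∂_x² v + |v|²·v − (1/2)(v·v)·v̄ + v. -/
open Matrix

noncomputable section

set_option maxHeartbeats 2000000 in
/-- for the +1 flow data in SO(N+1), the pair of Cartan structure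
equations (zero torsion and constant curvature) holds if and only if the complex
combination v = v₁ + i·v₂ satisfies the U(N−1)-invariant vector NLS equation
i·∂_t v = ∂_x² v + |v|²·v − (1/2)(v·v)·v̄ + v. -/
theorem statement15 (n : ℕ) (hn : 1 ≤ n)
    (v1 v2 : ℝ → ℝ → Fin n → ℝ)
    (hv1 : ∀ j, ContDiff ℝ (⊤ : ℕ∞) fun q : ℝ × ℝ => v1 q.1 q.2 j)
    (hv2 : ∀ j, ContDiff ℝ (⊤ : ℕ∞) fun q : ℝ × ℝ => v2 q.1 q.2 j)
    (vc : ℝ → ℝ → Fin n → ℂ)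
    (hvc : ∀ t x j, vc t x j = (v1 t x j : ℂ) + Complex.I * (v2 t x j : ℂ))
    (ex : Matrix (Jdx n) (Jdx n) ℝ) (hex : ex = Em n)
    (ωx et ωt : ℝ → ℝ → Matrix (Jdx n) (Jdx n) ℝ)
    (hωx : ∀ t x, ωx t x = Matrix.fromBlocks 0 (row2 (v1 t x) (v2 t x))
        (-(row2 (v1 t x) (v2 t x))ᵀ) 0)
    (het : ∀ t x, et t x = Matrix.fromBlocks 0 (row2 (v1 t x) (v2 t x))
        (-(row2 (v1 t x) (v2 t x))ᵀ) 0)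
    (θf : ℝ → ℝ → ℝ)
    (hθdef : ∀ t x, θf t x = -(1 / 2) * ∑ j, (v1 t x j ^ 2 + v2 t x j ^ 2))
    (W : ℝ → ℝ → Matrix (Fin 2) (Fin n) ℝ)
    (hWdef : ∀ t x, W t x = row2 (fun j => deriv (fun y => v2 t y j) x)
        (fun j => -deriv (fun y => v1 t y j) x))
    (Θ : ℝ → ℝ → Matrix (Fin n) (Fin n) ℝ)
    (hΘdef : ∀ t x, Θ t x = Matrix.of fun j k =>
        v1 t x j * v2 t x k - v2 t x j * v1 t x k)
    (hωt : ∀ t x, ωt t x = Matrix.fromBlocks (θf t x • Jm) (W t x)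
        (-(W t x)ᵀ) (Θ t x)) :
    ((∀ t x, dxMR et t x - dtMR (fun _ _ => ex) t x
        + (ωx t x * et t x - et t x * ωx t x)
        - (ωt t x * ex - ex * ωt t x) = 0) ∧
     (∀ t x, dxMR ωt t x - dtMR ωx t x
        + (ωx t x * ωt t x - ωt t x * ωx t x)
        = -(ex * et t x - et t x * ex)))
    ↔ (∀ t x j, Complex.I * dtV vc t x j
        = deriv (fun y => dxV vc t y j) x
          + dotv (vc t x) (cvec (vc t x)) * vc t x j
          - (1 / 2) * dotv (vc t x) (vc t x) * cvec (vc t x) j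
          + vc t x j) := by

  classical
  have h1top : ((⊤ : ℕ∞) : WithTop ℕ∞) ≠ 0 := by simp
  -- smoothness of slices
  have smx1 : ∀ (t : ℝ) (j : Fin n), ContDiff ℝ (⊤ : ℕ∞) (fun y => v1 t y j) :=
    fun t j => ((hv1 j).of_le (by simp)).comp (contDiff_const.prodMk contDiff_id)
  have smx2 : ∀ (t : ℝ) (j : Fin n), ContDiff ℝ (⊤ : ℕ∞) (fun y => v2 t y j) :=
    fun t j => ((hv2 j).of_le (by simp)).comp (contDiff_const.prodMk contDiff_id)
  have hDx1 : ∀ (t y : ℝ) (j : Fin n),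
      HasDerivAt (fun z => v1 t z j) (deriv (fun z => v1 t z j) y) y :=
    fun t y j => (((smx1 t j).differentiable h1top) y).hasDerivAt
  have hDx2 : ∀ (t y : ℝ) (j : Fin n),
      HasDerivAt (fun z => v2 t z j) (deriv (fun z => v2 t z j) y) y :=
    fun t y j => (((smx2 t j).differentiable h1top) y).hasDerivAt
  have hDxx1 : ∀ (t x : ℝ) (j : Fin n),
      HasDerivAt (fun y => deriv (fun z => v1 t z j) y)
        (deriv (fun y => deriv (fun z => v1 t z j) y) x) x :=
    fun t x j =>
      ((((contDiff_infty_iff_deriv.mp (smx1 t j)).2).differentiable h1top) x).hasDerivAt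
  have hDxx2 : ∀ (t x : ℝ) (j : Fin n),
      HasDerivAt (fun y => deriv (fun z => v2 t z j) y)
        (deriv (fun y => deriv (fun z => v2 t z j) y) x) x :=
    fun t x j =>
      ((((contDiff_infty_iff_deriv.mp (smx2 t j)).2).differentiable h1top) x).hasDerivAt
  have hDt1 : ∀ (t x : ℝ) (j : Fin n),
      HasDerivAt (fun s => v1 s x j) (deriv (fun s => v1 s x j) t) t :=
    fun t x j => ((((hv1 j).of_le (by simp)).comp
      (contDiff_id.prodMk contDiff_const)).differentiable h1top t).hasDerivAt
  have hDt2 : ∀ (t x : ℝ) (j : Fin n),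
      HasDerivAt (fun s => v2 s x j) (deriv (fun s => v2 s x j) t) t :=
    fun t x j => ((((hv2 j).of_le (by simp)).comp
      (contDiff_id.prodMk contDiff_const)).differentiable h1top t).hasDerivAt
  have torsion : ∀ t x, dxMR et t x - dtMR (fun _ _ => ex) t x
      + (ωx t x * et t x - et t x * ωx t x)
      - (ωt t x * ex - ex * ωt t x) = 0 := by
    intro t x
    have hc : ωx t x * et t x - et t x * ωx t x = 0 := by rw [hωx, het, sub_self]
    rw [hc, hex]
    ext i j
    rcases i with i | i <;> rcases j with j | j <;>
      simp only [dxMR, dtMR, Matrix.of_apply, Matrix.sub_apply, Matrix.add_apply,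
        Matrix.zero_apply, deriv_const, het, hωt, hWdef, hθdef, hΘdef, Matrix.mul_apply,
        Fintype.sum_sum_type, Em, Jm, row2,
        Matrix.fromBlocks_apply₁₁, Matrix.fromBlocks_apply₁₂,
        Matrix.fromBlocks_apply₂₁, Matrix.fromBlocks_apply₂₂]
    · fin_cases i <;> fin_cases j <;>
        simp [Fin.sum_univ_two, deriv_const, Matrix.vecHead, Matrix.vecTail, deriv.neg]
    · fin_cases i <;>
        simp [Fin.sum_univ_two, deriv_const, Matrix.vecHead, Matrix.vecTail, deriv.neg]
    · fin_cases j <;>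
        simp [Fin.sum_univ_two, deriv_const, Matrix.vecHead, Matrix.vecTail, deriv.neg]
    · simp [Fin.sum_univ_two, deriv_const, Matrix.vecHead, Matrix.vecTail, deriv.neg]

  have key : ∀ t x, (dxMR ωt t x - dtMR ωx t x
        + (ωx t x * ωt t x - ωt t x * ωx t x)
        = -(ex * et t x - et t x * ex)) ↔
      (∀ j, Complex.I * dtV vc t x j
        = deriv (fun y => dxV vc t y j) x
          + dotv (vc t x) (cvec (vc t x)) * vc t x j
          - (1 / 2) * dotv (vc t x) (vc t x) * cvec (vc t x) j
          + vc t x j) := by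
    intro t x
    have cm : ∀ f g : Fin n → ℝ, ∑ j, f j * g j = ∑ j, g j * f j :=
      fun f g => Finset.sum_congr rfl fun j _ => mul_comm _ _
    have hs : deriv (fun y => ∑ j, (v1 t y j ^ 2 + v2 t y j ^ 2)) x
        = 2 * (∑ j, v1 t x j * deriv (fun y => v1 t y j) x)
          + 2 * (∑ j, v2 t x j * deriv (fun y => v2 t y j) x) := by
      have h2 : HasDerivAt (fun y => ∑ j, (v1 t y j ^ 2 + v2 t y j ^ 2)) _ x := HasDerivAt.fun_sum (u := Finset.univ)
        (fun (j : Fin n) (_ : j ∈ Finset.univ) => ((hDx1 t x j).pow 2).add ((hDx2 t x j).pow 2))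
      rw [h2.deriv, Finset.mul_sum, Finset.mul_sum, ← Finset.sum_add_distrib]
      exact Finset.sum_congr rfl fun j _ => by push_cast; ring
    have c1 : ∀ k, ∑ j, v1 t x j * (v1 t x j * v2 t x k - v2 t x j * v1 t x k)
        = (∑ j, v1 t x j * v1 t x j) * v2 t x k - (∑ j, v1 t x j * v2 t x j) * v1 t x k := by
      intro k
      rw [Finset.sum_mul, Finset.sum_mul, ← Finset.sum_sub_distrib]
      exact Finset.sum_congr rfl fun j _ => by ring
    have c2 : ∀ k, ∑ j, v2 t x j * (v1 t x j * v2 t x k - v2 t x j * v1 t x k)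
        = (∑ j, v1 t x j * v2 t x j) * v2 t x k - (∑ j, v2 t x j * v2 t x j) * v1 t x k := by
      intro k
      rw [Finset.sum_mul, Finset.sum_mul, ← Finset.sum_sub_distrib]
      exact Finset.sum_congr rfl fun j _ => by ring
    have c3 : ∀ k, ∑ j, (v1 t x k * v2 t x j - v2 t x k * v1 t x j) * v1 t x j
        = (∑ j, v1 t x j * v2 t x j) * v1 t x k - (∑ j, v1 t x j * v1 t x j) * v2 t x k := by
      intro k
      rw [Finset.sum_mul, Finset.sum_mul, ← Finset.sum_sub_distrib]
      exact Finset.sum_congr rfl fun j _ => by ring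
    have c4 : ∀ k, ∑ j, (v1 t x k * v2 t x j - v2 t x k * v1 t x j) * v2 t x j
        = (∑ j, v2 t x j * v2 t x j) * v1 t x k - (∑ j, v1 t x j * v2 t x j) * v2 t x k := by
      intro k
      rw [Finset.sum_mul, Finset.sum_mul, ← Finset.sum_sub_distrib]
      exact Finset.sum_congr rfl fun j _ => by ring
    have c11 : ∑ j, (v1 t x j ^ 2 + v2 t x j ^ 2)
        = (∑ j, v1 t x j * v1 t x j) + (∑ j, v2 t x j * v2 t x j) := by
      rw [← Finset.sum_add_distrib]
      exact Finset.sum_congr rfl fun j _ => by ring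
    have hmain : dxMR ωt t x - dtMR ωx t x + (ωx t x * ωt t x - ωt t x * ωx t x)
        + (Em n * et t x - et t x * Em n)
        = Matrix.fromBlocks 0 (row2 (fun k => deriv (fun y => deriv (fun z => v2 t z k) y) x - deriv (fun s => v1 s x k) t + ((∑ j, v1 t x j * v1 t x j) * v2 t x k - (∑ j, v1 t x j * v2 t x j) * v1 t x k) + (1/2) * ((∑ j, v1 t x j * v1 t x j) + (∑ j, v2 t x j * v2 t x j)) * v2 t x k + v2 t x k) (fun k => -deriv (fun y => deriv (fun z => v1 t z k) y) x - deriv (fun s => v2 s x k) t + ((∑ j, v1 t x j * v2 t x j) * v2 t x k - (∑ j, v2 t x j * v2 t x j) * v1 t x k) - (1/2) * ((∑ j, v1 t x j * v1 t x j) + (∑ j, v2 t x j * v2 t x j)) * v1 t x k - v1 t x k))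
            (-(row2 (fun k => deriv (fun y => deriv (fun z => v2 t z k) y) x - deriv (fun s => v1 s x k) t + ((∑ j, v1 t x j * v1 t x j) * v2 t x k - (∑ j, v1 t x j * v2 t x j) * v1 t x k) + (1/2) * ((∑ j, v1 t x j * v1 t x j) + (∑ j, v2 t x j * v2 t x j)) * v2 t x k + v2 t x k) (fun k => -deriv (fun y => deriv (fun z => v1 t z k) y) x - deriv (fun s => v2 s x k) t + ((∑ j, v1 t x j * v2 t x j) * v2 t x k - (∑ j, v2 t x j * v2 t x j) * v1 t x k) - (1/2) * ((∑ j, v1 t x j * v1 t x j) + (∑ j, v2 t x j * v2 t x j)) * v1 t x k - v1 t x k)))ᵀ 0 := by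
      ext i j
      rcases i with i | i <;> rcases j with j | j <;>
        simp only [dxMR, dtMR, Matrix.of_apply, Matrix.sub_apply, Matrix.add_apply,
          Matrix.neg_apply, Matrix.transpose_apply, Matrix.zero_apply, Matrix.smul_apply,
          smul_eq_mul, Matrix.mul_apply, Fintype.sum_sum_type,
          Matrix.fromBlocks_apply₁₁, Matrix.fromBlocks_apply₁₂,
          Matrix.fromBlocks_apply₂₁, Matrix.fromBlocks_apply₂₂,
          hωx, het, hωt, hWdef, hθdef, hΘdef, row2, Em, Jm, Fin.sum_univ_two]
      · fin_cases i <;> fin_cases j <;>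
          simp [Matrix.vecHead, Matrix.vecTail, deriv_const, deriv.neg]
        · rw [cm (fun j => deriv (fun y => v2 t y j) x) (v1 t x)]; ring
        · rw [hs, cm (fun j => deriv (fun y => v2 t y j) x) (v2 t x)]; ring
        · rw [hs, cm (fun j => deriv (fun y => v1 t y j) x) (v1 t x)]; ring
        · rw [cm (fun j => deriv (fun y => v1 t y j) x) (v2 t x)]; ring
      · fin_cases i <;>
          simp [Matrix.vecHead, Matrix.vecTail, deriv_const, deriv.neg]
        · rw [c1 j, c11]; ring
        · rw [c2 j, c11]; ring
      · fin_cases j <;>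
          simp [Matrix.vecHead, Matrix.vecTail, deriv_const, deriv.neg]
        · rw [c3 i, c11]; ring
        · rw [c4 i, c11]; ring
      · simp [Matrix.vecHead, Matrix.vecTail, deriv_const, deriv.neg]
        rw [(show HasDerivAt (fun y => v1 t y i * v2 t y j - v2 t y i * v1 t y j) _ x from (((hDx1 t x i).mul (hDx2 t x j)).sub ((hDx2 t x i).mul (hDx1 t x j)))).deriv]
        ring
    have hz : (Matrix.fromBlocks 0 (row2 (fun k => deriv (fun y => deriv (fun z => v2 t z k) y) x - deriv (fun s => v1 s x k) t + ((∑ j, v1 t x j * v1 t x j) * v2 t x k - (∑ j, v1 t x j * v2 t x j) * v1 t x k) + (1/2) * ((∑ j, v1 t x j * v1 t x j) + (∑ j, v2 t x j * v2 t x j)) * v2 t x k + v2 t x k) (fun k => -deriv (fun y => deriv (fun z => v1 t z k) y) x - deriv (fun s => v2 s x k) t + ((∑ j, v1 t x j * v2 t x j) * v2 t x k - (∑ j, v2 t x j * v2 t x j) * v1 t x k) - (1/2) * ((∑ j, v1 t x j * v1 t x j) + (∑ j, v2 t x j * v2 t x j)) * v1 t x k - v1 t x k))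
            (-(row2 (fun k => deriv (fun y => deriv (fun z => v2 t z k) y) x - deriv (fun s => v1 s x k) t + ((∑ j, v1 t x j * v1 t x j) * v2 t x k - (∑ j, v1 t x j * v2 t x j) * v1 t x k) + (1/2) * ((∑ j, v1 t x j * v1 t x j) + (∑ j, v2 t x j * v2 t x j)) * v2 t x k + v2 t x k) (fun k => -deriv (fun y => deriv (fun z => v1 t z k) y) x - deriv (fun s => v2 s x k) t + ((∑ j, v1 t x j * v2 t x j) * v2 t x k - (∑ j, v2 t x j * v2 t x j) * v1 t x k) - (1/2) * ((∑ j, v1 t x j * v1 t x j) + (∑ j, v2 t x j * v2 t x j)) * v1 t x k - v1 t x k)))ᵀ 0 = (0 : Matrix (Jdx n) (Jdx n) ℝ))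
        ↔ ∀ k, (fun k => deriv (fun y => deriv (fun z => v2 t z k) y) x - deriv (fun s => v1 s x k) t + ((∑ j, v1 t x j * v1 t x j) * v2 t x k - (∑ j, v1 t x j * v2 t x j) * v1 t x k) + (1/2) * ((∑ j, v1 t x j * v1 t x j) + (∑ j, v2 t x j * v2 t x j)) * v2 t x k + v2 t x k) k = 0 ∧ (fun k => -deriv (fun y => deriv (fun z => v1 t z k) y) x - deriv (fun s => v2 s x k) t + ((∑ j, v1 t x j * v2 t x j) * v2 t x k - (∑ j, v2 t x j * v2 t x j) * v1 t x k) - (1/2) * ((∑ j, v1 t x j * v1 t x j) + (∑ j, v2 t x j * v2 t x j)) * v1 t x k - v1 t x k) k = 0 := by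
      constructor
      · intro h k
        constructor
        · have h0 := congrFun (congrFun h (Sum.inl 0)) (Sum.inr k)
          simpa [row2, Matrix.vecHead, Matrix.vecTail] using h0
        · have h1 := congrFun (congrFun h (Sum.inl 1)) (Sum.inr k)
          simpa [row2, Matrix.vecHead, Matrix.vecTail] using h1
      · intro h
        ext i j
        rcases i with i | i <;> rcases j with j | j <;>
          simp [row2, Matrix.vecHead, Matrix.vecTail]
        · fin_cases i <;> simp [Matrix.vecHead, Matrix.vecTail]
          · simpa using (h j).1
          · simpa using (h j).2
        · fin_cases j <;> simp [Matrix.vecHead, Matrix.vecTail]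
          · first
            | linear_combination (h i).1
            | linear_combination -(h i).1
          · first
            | linear_combination (h i).2
            | linear_combination -(h i).2
    have hnls : ∀ k, (Complex.I * dtV vc t x k
        = deriv (fun y => dxV vc t y k) x
          + dotv (vc t x) (cvec (vc t x)) * vc t x k
          - (1 / 2) * dotv (vc t x) (vc t x) * cvec (vc t x) k
          + vc t x k) ↔ ((fun k => deriv (fun y => deriv (fun z => v2 t z k) y) x - deriv (fun s => v1 s x k) t + ((∑ j, v1 t x j * v1 t x j) * v2 t x k - (∑ j, v1 t x j * v2 t x j) * v1 t x k) + (1/2) * ((∑ j, v1 t x j * v1 t x j) + (∑ j, v2 t x j * v2 t x j)) * v2 t x k + v2 t x k) k = 0 ∧ (fun k => -deriv (fun y => deriv (fun z => v1 t z k) y) x - deriv (fun s => v2 s x k) t + ((∑ j, v1 t x j * v2 t x j) * v2 t x k - (∑ j, v2 t x j * v2 t x j) * v1 t x k) - (1/2) * ((∑ j, v1 t x j * v1 t x j) + (∑ j, v2 t x j * v2 t x j)) * v1 t x k - v1 t x k) k = 0) := by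
      intro k
      have e1 : dtV vc t x k
          = (↑(deriv (fun s => v1 s x k) t) + Complex.I * ↑(deriv (fun s => v2 s x k) t) : ℂ) := by
        have hf : (fun s => vc s x k) = fun s => (↑(v1 s x k) + Complex.I * ↑(v2 s x k) : ℂ) :=
          funext fun s => hvc s x k
        show deriv (fun s => vc s x k) t = _
        rw [hf]
        exact ((hDt1 t x k).ofReal_comp.add (((hDt2 t x k).ofReal_comp).const_mul Complex.I)).deriv
      have e2 : deriv (fun y => dxV vc t y k) x
          = (↑(deriv (fun y => deriv (fun z => v1 t z k) y) x)
            + Complex.I * ↑(deriv (fun y => deriv (fun z => v2 t z k) y) x) : ℂ) := by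
        have hf : (fun y => dxV vc t y k)
            = fun y => (↑(deriv (fun z => v1 t z k) y)
              + Complex.I * ↑(deriv (fun z => v2 t z k) y) : ℂ) := by
          funext y
          show deriv (fun z => vc t z k) y = _
          have hg : (fun z => vc t z k) = fun z => (↑(v1 t z k) + Complex.I * ↑(v2 t z k) : ℂ) :=
            funext fun z => hvc t z k
          rw [hg]
          exact ((hDx1 t y k).ofReal_comp.add
            (((hDx2 t y k).ofReal_comp).const_mul Complex.I)).deriv
        rw [hf]
        exact ((hDxx1 t x k).ofReal_comp.add
          (((hDxx2 t x k).ofReal_comp).const_mul Complex.I)).deriv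
      rw [e1, e2]
      unfold dotv cvec
      simp only [hvc, map_add, _root_.map_mul, Complex.conj_I, Complex.conj_ofReal]
      have h12 : (1 / 2 : ℂ) = ((1 / 2 : ℝ) : ℂ) := by norm_num
      rw [h12, Complex.ext_iff]
      simp [Complex.add_re, Complex.add_im, Complex.sub_re, Complex.sub_im, Complex.mul_re,
        Complex.mul_im, Complex.I_re, Complex.I_im, Complex.ofReal_re, Complex.ofReal_im,
        Complex.re_sum, Complex.im_sum, Complex.neg_re, Complex.neg_im,
        Finset.sum_add_distrib, Finset.sum_sub_distrib, Finset.sum_neg_distrib]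
      try rw [cm (v2 t x) (v1 t x)]
      constructor
      · rintro ⟨hre, him⟩
        constructor
        · first
          | linear_combination him
          | linear_combination -him
        · first
          | linear_combination hre
          | linear_combination -hre
      · rintro ⟨h0, h1⟩
        constructor
        · first
          | linear_combination h1
          | linear_combination -h1
        · first
          | linear_combination h0
          | linear_combination -h0
    rw [hex, eq_neg_iff_add_eq_zero, hmain, hz]
    exact ⟨fun h j => (hnls j).mpr (h j), fun h k => (hnls k).mp (h k)⟩
  constructor
  · rintro ⟨-, h⟩ t x j
    exact (key t x).mp (h t x) j
  · intro h
    exact ⟨torsion, fun t x => (key t x).mpr fun j => h t x j⟩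
end
end

section
/- (Conservation law of the −1 flow in SU(N).) Let N ≥ 2. Let v, h⊥ : ℝ → ℂ^{N−1} be differentiable row-vector-valued functions and let 𝐡 : ℝ → M_{N−1}(ℂ) be a differentiable matrix-valued function with 𝐡(x)† = −𝐡(x) for all x. Set h := −i·tr 𝐡 (a real-valued function). Suppose that for all x: (i) h⊥′ + i·h·v + v⌟𝐡 = 0, and (ii) 𝐡′ = v̄⊗h⊥ − h̄⊥⊗v. Then the function x ↦ |h⊥(x)|² + (1/2)·(h(x)² − tr(𝐡(x)²)) is constant on ℝ. (This is the conservation law 0 = D_x(|h⊥|² + (1/2)(h² + |𝐡|²)) corresponding to the chiral wave map conservation law 0 = ∇_x|γ_t|²_g for the −1 flow, used to normalize |γ_t|_g and derive the complex vector sine-Gordon equation.) -/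
open Matrix

noncomputable section

/-!
Along the flow, `(|h⊥|²)' = h⊥'·h̄⊥ + h⊥·h̄⊥'` splits into an `h`-part and a `𝐡`-part. Since `𝐡` is
anti-Hermitian, `h = -i tr 𝐡` is real, and the `h`-part cancels against `h h' = -i h tr 𝐡'`.
Since `𝐡' = v̄⊗h⊥ − h̄⊥⊗v` has rank two and `tr ((a ⊗ b) 𝐡) = (b⌟𝐡)·a`, the `𝐡`-part cancels against
`½ (tr 𝐡²)' = tr (𝐡' 𝐡)`.
-/

open Complex

theorem contr_eq_vecMul {n : ℕ} (p : Fin n → ℂ) (M : Matrix (Fin n) (Fin n) ℂ) :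
    contr p M = p ᵥ* M := rfl

section Derivatives

variable {𝕜 : Type*} [NontriviallyNormedField 𝕜] {R : Type*} [NormedRing R] [NormedAlgebra 𝕜 R]
  {ι : Type*} [Fintype ι] {x : 𝕜}

theorem HasDerivAt.dotProduct {f g : 𝕜 → ι → R} {f' g' : ι → R}
    (hf : HasDerivAt f f' x) (hg : HasDerivAt g g' x) :
    HasDerivAt (fun y => f y ⬝ᵥ g y) (f' ⬝ᵥ g x + f x ⬝ᵥ g') x := by
  have := HasDerivAt.fun_sum fun i (_ : i ∈ Finset.univ) =>
    (hasDerivAt_pi.1 hf i).mul (hasDerivAt_pi.1 hg i)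
  simpa only [_root_.dotProduct, Pi.mul_apply, Finset.sum_add_distrib] using this

/- `Matrix` carries no global norm, so derivatives of matrix-valued functions are taken
entrywise. -/

theorem HasDerivAt.matrix_trace {A : 𝕜 → Matrix ι ι R} {A' : Matrix ι ι R}
    (hA : ∀ i j, HasDerivAt (fun y => A y i j) (A' i j) x) :
    HasDerivAt (fun y => (A y).trace) A'.trace x :=
  HasDerivAt.fun_sum fun i _ => hA i i

theorem HasDerivAt.matrix_trace_mul {A B : 𝕜 → Matrix ι ι R} {A' B' : Matrix ι ι R}
    (hA : ∀ i j, HasDerivAt (fun y => A y i j) (A' i j) x)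
    (hB : ∀ i j, HasDerivAt (fun y => B y i j) (B' i j) x) :
    HasDerivAt (fun y => (A y * B y).trace) (A' * B x + A x * B').trace x := by
  have := HasDerivAt.fun_sum fun i (_ : i ∈ Finset.univ) =>
    (hasDerivAt_pi.2 (hA i)).dotProduct (g := fun y j => B y j i) (hasDerivAt_pi.2 fun j => hB j i)
  simpa only [trace, diag, Matrix.add_apply, mul_apply', Finset.sum_add_distrib] using this

end Derivatives

section Energy

variable {ι : Type*} [Fintype ι]

def flowEnergy (p : ι → ℂ) (h : ℂ) (M : Matrix ι ι ℂ) : ℂ :=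
  p ⬝ᵥ star p + 1 / 2 * (h ^ 2 - (M * M).trace)

theorem HasDerivAt.flowEnergy {p : ℝ → ι → ℂ} {h : ℝ → ℂ} {M : ℝ → Matrix ι ι ℂ}
    {p' : ι → ℂ} {h' : ℂ} {M' : Matrix ι ι ℂ} {x : ℝ} (hp : HasDerivAt p p' x)
    (hh : HasDerivAt h h' x) (hM : ∀ i j, HasDerivAt (fun y => M y i j) (M' i j) x) :
    HasDerivAt (fun y => _root_.flowEnergy (p y) (h y) (M y))
      (p' ⬝ᵥ star (p x) + p x ⬝ᵥ star p' + 1 / 2 * (2 * h x * h' - (M' * M x + M x * M').trace))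
      x := by
  have := (hp.dotProduct hp.star).add (((hh.pow 2).sub (.matrix_trace_mul hM hM)).const_mul (1 / 2 : ℂ))
  rw [Nat.cast_ofNat, pow_one] at this
  exact this

theorem star_neg_I_mul_trace_of_conjTranspose_eq_neg {M : Matrix ι ι ℂ} (hM : Mᴴ = -M) :
    star (-I * M.trace) = -I * M.trace := by
  rw [star_mul', ← trace_conjTranspose, hM, trace_neg]
  simp

theorem flowEnergy_deriv_eq_zero {v p p' : ι → ℂ} {M M' : Matrix ι ι ℂ} {h : ℂ}
    (hM : Mᴴ = -M) (hh : h = -I * M.trace)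
    (hp' : p' = -(I * h) • v - v ᵥ* M) (hM' : M' = vecMulVec (star v) p - vecMulVec (star p) v) :
    p' ⬝ᵥ star p + p ⬝ᵥ star p' + 1 / 2 * (2 * h * (-I * M'.trace) - (M' * M + M * M').trace)
      = 0 := by
  have hh_star : star h = h := hh ▸ star_neg_I_mul_trace_of_conjTranspose_eq_neg hM
  have hstar_p' : star p' = (I * h) • star v + M *ᵥ star v := by
    rw [hp', star_sub, star_smul, star_vecMul, hM, star_neg, star_mul', hh_star]
    simp [neg_mulVec]
  rw [hstar_p', trace_add, trace_mul_comm M, ← two_mul, hM', sub_mul, vecMulVec_mul, vecMulVec_mul,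
    trace_sub, trace_sub, trace_vecMulVec, trace_vecMulVec, trace_vecMulVec, trace_vecMulVec, hp',
    sub_dotProduct, dotProduct_add, smul_dotProduct, dotProduct_smul, dotProduct_mulVec,
    dotProduct_comm (star v) p, dotProduct_comm (star p) v,
    dotProduct_comm (star v), dotProduct_comm (star p)]
  simp only [smul_eq_mul]
  ring

end Energy

theorem statement17_general (n : ℕ)
    (v hp : ℝ → Fin n → ℂ) (hm : ℝ → Matrix (Fin n) (Fin n) ℂ)
    (hdh : ∀ j, Differentiable ℝ fun x => hp x j)
    (hdm : ∀ j k, Differentiable ℝ fun x => hm x j k)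
    (hanti : ∀ x, (hm x)ᴴ = -(hm x))
    (h : ℝ → ℂ) (hdef : ∀ x, h x = -Complex.I * (hm x).trace)
    (heq1 : ∀ x j, deriv (fun y => hp y j) x + Complex.I * h x * v x j
        + contr (v x) (hm x) j = 0)
    (heq2 : ∀ x j k, deriv (fun y => hm y j k) x
        = starRingEnd ℂ (v x j) * hp x k - starRingEnd ℂ (hp x j) * v x k) :
    ∀ x y, dotv (hp x) (cvec (hp x)) + (1 / 2) * ((h x) ^ 2 - (hm x * hm x).trace)
        = dotv (hp y) (cvec (hp y)) + (1 / 2) * ((h y) ^ 2 - (hm y * hm y).trace) := by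
  have hderiv : ∀ x, HasDerivAt (fun y => flowEnergy (hp y) (h y) (hm y)) 0 x := by
    intro x
    set p' := -(I * h x) • v x - v x ᵥ* hm x
    set M' := vecMulVec (star (v x)) (hp x) - vecMulVec (star (hp x)) (v x)
    have hp' : HasDerivAt hp p' x := hasDerivAt_pi.2 fun j =>
      (hdh j x).hasDerivAt.congr_deriv <| by
        simp only [p', Pi.sub_apply, Pi.smul_apply, smul_eq_mul, ← contr_eq_vecMul]
        linear_combination heq1 x j
    have hm' : ∀ j k, HasDerivAt (fun y => hm y j k) (M' j k) x := fun j k =>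
      (hdm j k x).hasDerivAt.congr_deriv <| by simp [M', heq2, vecMulVec_apply]
    have hh' : HasDerivAt h (-I * M'.trace) x := by
      rw [funext hdef]
      exact (HasDerivAt.matrix_trace hm').const_mul _
    exact (hp'.flowEnergy hh' hm').congr_deriv (flowEnergy_deriv_eq_zero (hanti x) (hdef x) rfl rfl)
  exact is_const_of_deriv_eq_zero (fun x => (hderiv x).differentiableAt) (fun x => (hderiv x).deriv)

/-- conservation law of the −1 flow in SU(N):
under h⊥′ + i·h·v + v⌟𝐡 = 0 and 𝐡′ = v̄⊗h⊥ − h̄⊥⊗v (with 𝐡 anti-Hermitian and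
h = −i·tr 𝐡), the quantity |h⊥|² + (1/2)(h² − tr(𝐡²)) is constant. -/
theorem statement17 (n : ℕ) (hn : 1 ≤ n)
    (v hp : ℝ → Fin n → ℂ) (hm : ℝ → Matrix (Fin n) (Fin n) ℂ)
    (hdv : ∀ j, Differentiable ℝ fun x => v x j)
    (hdh : ∀ j, Differentiable ℝ fun x => hp x j)
    (hdm : ∀ j k, Differentiable ℝ fun x => hm x j k)
    (hanti : ∀ x, (hm x)ᴴ = -(hm x))
    (h : ℝ → ℂ) (hdef : ∀ x, h x = -Complex.I * (hm x).trace)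
    (heq1 : ∀ x j, deriv (fun y => hp y j) x + Complex.I * h x * v x j
        + contr (v x) (hm x) j = 0)
    (heq2 : ∀ x j k, deriv (fun y => hm y j k) x
        = starRingEnd ℂ (v x j) * hp x k - starRingEnd ℂ (hp x j) * v x k) :
    ∀ x y, dotv (hp x) (cvec (hp x)) + (1 / 2) * ((h x) ^ 2 - (hm x * hm x).trace)
        = dotv (hp y) (cvec (hp y)) + (1 / 2) * ((h y) ^ 2 - (hm y * hm y).trace) :=
  statement17_general n v hp hm hdh hdm hanti h hdef heq1 heq2
end
end
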